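/- arXiv:1709.00805 — 5 statements merged into one kernel-verified Lean document; each statement's English description precedes it below -/
import Mathlib

section
/- Let α ∈ (1,2), N > 0, and f : ℝ → ℝ twice continuously differentiable with bounded derivatives f', f''. Define Δ^{α/2}f(x) = d_α ∫_ℝ (f(x+y) − f(x) − y f'(x))/|y|^{1+α} dy. Then Δ^{α/2}f(x) = ∫_{−N}^N K_α(t,N) f''(x+t) dt + R(x), where K_α(t,N) = (d_α/(α(α−1)))(|t|^{1−α} − N^{1−α}) and R(x) = (d_α/α) ∫_{|z|>N} (f'(x+z) − f'(x))/(sgn(z)|z|^α) dz. -/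
open MeasureTheory Set Filter Topology

lemma integrableOn_of_bound {s : Set ℝ} (hs : MeasurableSet s) {θ b : ℝ → ℝ}
    (hm : ContinuousOn θ s) (hb : IntegrableOn b s) (h : ∀ y ∈ s, |θ y| ≤ b y) :
    IntegrableOn θ s :=
  Integrable.mono' hb (hm.aestronglyMeasurable hs)
    ((ae_restrict_iff' hs).2 (Filter.Eventually.of_forall fun y hy => by
      simpa [Real.norm_eq_abs] using h y hy))

lemma int_tail {α N C : ℝ} (hα : 1 < α) (hN : 0 < N) {ψ : ℝ → ℝ}
    (hm : ContinuousOn ψ (Ioi N)) (hb : ∀ y ∈ Ioi N, |ψ y| ≤ C * y ^ (-α)) :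
    IntegrableOn ψ (Ioi N) :=
  integrableOn_of_bound measurableSet_Ioi hm
    ((integrableOn_Ioi_rpow_of_lt (by linarith) hN).const_mul C) hb

lemma int_mid {α N C C' : ℝ} (hα : α < 2) (hN : 0 < N) {ψ : ℝ → ℝ}
    (hm : ContinuousOn ψ (Ioc 0 N)) (hb : ∀ y ∈ Ioc 0 N, |ψ y| ≤ C * y ^ (1 - α) + C') :
    IntegrableOn ψ (Ioc 0 N) := by
  refine integrableOn_of_bound measurableSet_Ioc hm ?_ hb
  have h1 : IntegrableOn (fun y : ℝ => y ^ (1 - α)) (Ioc 0 N) := by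
    rw [← intervalIntegrable_iff_integrableOn_Ioc_of_le hN.le]
    exact intervalIntegral.intervalIntegrable_rpow' (by linarith)
  exact (h1.const_mul C).add (integrableOn_const measure_Ioc_lt_top.ne)

lemma tail_ibp {α N C : ℝ} (hα : 1 < α) (hN : 0 < N) {φ φ' : ℝ → ℝ}
    (hd : ∀ y, HasDerivAt φ (φ' y) y)
    (I1 : IntegrableOn (fun y => φ y / y ^ (1 + α)) (Ioi N))
    (I2 : IntegrableOn (fun y => φ' y / y ^ α) (Ioi N))
    (hbφ : ∀ y, |φ y| ≤ C * |y|) :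
    ∫ y in Ioi N, φ y / y ^ (1 + α)
      = φ N * N ^ (-α) / α + (1 / α) * ∫ y in Ioi N, φ' y / y ^ α := by
  have hα0 : (0:ℝ) < α := by linarith
  have hcφ : Continuous φ := continuous_iff_continuousAt.2 fun y => (hd y).continuousAt
  set H : ℝ → ℝ := fun y => -(φ y * y ^ (-α)) / α with hH
  have Hd : ∀ y ∈ Ioi N, HasDerivAt H (φ y / y ^ (1 + α) - 1 / α * (φ' y / y ^ α)) y := by
    intro y hy
    have hy0 : (0:ℝ) < y := hN.trans hy
    have h1 : HasDerivAt (fun z : ℝ => z ^ (-α)) (-α * y ^ (-α - 1)) y :=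
      Real.hasDerivAt_rpow_const (Or.inl hy0.ne')
    have h2 := (((hd y).mul h1).neg).div_const α
    refine h2.congr_deriv ?_
    have e1 : y ^ (-α - 1) = (y ^ (1 + α))⁻¹ := by
      rw [show -α - 1 = -(1 + α) by ring, Real.rpow_neg hy0.le]
    have e2 : y ^ (-α) = (y ^ α)⁻¹ := Real.rpow_neg hy0.le α
    have p1 : y ^ (1 + α) ≠ 0 := (Real.rpow_pos_of_pos hy0 _).ne'
    have p2 : y ^ α ≠ 0 := (Real.rpow_pos_of_pos hy0 _).ne'
    rw [e1, e2]
    field_simp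
    ring
  have Htop : Tendsto H atTop (𝓝 0) := by
    have hg : Tendsto (fun y : ℝ => C / α * y ^ (1 - α)) atTop (𝓝 0) := by
      have := (tendsto_rpow_neg_atTop (show (0:ℝ) < α - 1 by linarith)).const_mul (C / α)
      simpa [show -(α - 1) = 1 - α by ring] using this
    refine squeeze_zero_norm' ?_ hg
    filter_upwards [eventually_gt_atTop (0:ℝ)] with y hy
    have hpow : (0:ℝ) < y ^ (-α) := Real.rpow_pos_of_pos hy _
    have e : y * y ^ (-α) = y ^ (1 - α) := by
      rw [show (1:ℝ) - α = 1 + -α by ring, Real.rpow_add hy, Real.rpow_one]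
    calc ‖H y‖ = |φ y| * y ^ (-α) / α := by
          rw [hH, Real.norm_eq_abs, abs_div, abs_neg, abs_mul, abs_of_pos hpow, abs_of_pos hα0]
      _ ≤ C * |y| * y ^ (-α) / α := by gcongr; exact hbφ y
      _ = C / α * y ^ (1 - α) := by rw [abs_of_pos hy, mul_assoc, e]; ring
  have HcontN : ContinuousWithinAt H (Ici N) N := by
    refine ContinuousAt.continuousWithinAt ?_
    exact (((hcφ.continuousAt).mul
      (Real.continuousAt_rpow_const N (-α) (Or.inl hN.ne'))).neg.div_const α)
  have FTC := integral_Ioi_of_hasDerivAt_of_tendsto (f := H) HcontN Hd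
    (I1.sub (I2.const_mul (1 / α))) Htop
  rw [integral_sub I1 (I2.const_mul (1 / α)), MeasureTheory.integral_const_mul] at FTC
  have hHN : H N = -(φ N * N ^ (-α)) / α := rfl
  rw [hHN] at FTC
  linear_combination FTC

lemma mid_ibp {α N C : ℝ} (hα1 : 1 < α) (hα2 : α < 2) (hN : 0 < N)
    {φ φ' φ'' : ℝ → ℝ} (hd : ∀ y, HasDerivAt φ (φ' y) y) (hd' : ∀ y, HasDerivAt φ' (φ'' y) y)
    (J1 : IntegrableOn (fun y => φ y / y ^ (1 + α)) (Ioc 0 N))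
    (J2 : IntegrableOn (fun y => (y ^ (1 - α) - N ^ (1 - α)) * φ'' y) (Ioc 0 N))
    (h0 : φ 0 = 0) (h0' : φ' 0 = 0)
    (hb : ∀ y, |φ y| ≤ C * y ^ 2) (hb' : ∀ y, |φ' y| ≤ C * |y|) :
    ∫ y in Ioc 0 N, φ y / y ^ (1 + α)
      = -(φ N * N ^ (-α) / α)
        + (1 / (α * (α - 1))) * ∫ y in Ioc 0 N, (y ^ (1 - α) - N ^ (1 - α)) * φ'' y := by
  have hα0 : (0:ℝ) < α := by linarith
  have hα1' : α - 1 ≠ 0 := by intro h; rw [sub_eq_zero] at h; exact (by linarith : (1:ℝ) < α).ne' h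
  have hcφ : Continuous φ := continuous_iff_continuousAt.2 fun y => (hd y).continuousAt
  have hcφ' : Continuous φ' := continuous_iff_continuousAt.2 fun y => (hd' y).continuousAt
  set H : ℝ → ℝ := fun y =>
    -(φ y * y ^ (-α)) / α - 1 / (α * (α - 1)) * ((y ^ (1 - α) - N ^ (1 - α)) * φ' y) with hH
  set D : ℝ → ℝ := fun y =>
    φ y / y ^ (1 + α) - 1 / (α * (α - 1)) * ((y ^ (1 - α) - N ^ (1 - α)) * φ'' y) with hD
  -- derivative on the open interval
  have Hd : ∀ y ∈ Ioo (0:ℝ) N, HasDerivWithinAt H (D y) (Ioi y) y := by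
    intro y hy
    have hy0 : (0:ℝ) < y := hy.1
    have h1 : HasDerivAt (fun z : ℝ => z ^ (-α)) (-α * y ^ (-α - 1)) y :=
      Real.hasDerivAt_rpow_const (Or.inl hy0.ne')
    have h2 : HasDerivAt (fun z : ℝ => z ^ (1 - α) - N ^ (1 - α)) ((1 - α) * y ^ (1 - α - 1)) y :=
      (Real.hasDerivAt_rpow_const (Or.inl hy0.ne')).sub_const _
    have h3 := (((hd y).mul h1).neg.div_const α).sub ((h2.mul (hd' y)).const_mul (1 / (α * (α - 1))))
    have e1 : y ^ (-α - 1) = (y ^ (1 + α))⁻¹ := by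
      rw [show -α - 1 = -(1 + α) by ring, Real.rpow_neg hy0.le]
    have e2 : y ^ (1 - α - 1) = y ^ (-α) := by norm_num
    have e3 : y ^ (-α) = (y ^ α)⁻¹ := Real.rpow_neg hy0.le α
    have p1 : y ^ (1 + α) ≠ 0 := (Real.rpow_pos_of_pos hy0 _).ne'
    have p2 : y ^ α ≠ 0 := (Real.rpow_pos_of_pos hy0 _).ne'
    have h4 : HasDerivAt H (D y) y := by
      refine h3.congr_deriv ?_
      rw [hD, e1, e2, e3]
      field_simp
      ring
    exact h4.hasDerivWithinAt
  -- continuity of H on [0, N]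
  have Hcont : ContinuousOn H (Icc 0 N) := by
    intro y hy
    rcases eq_or_lt_of_le hy.1 with h | h
    · -- y = 0
      have hH0 : H 0 = 0 := by simp [hH, h0, h0']
      rw [← h]
      show Tendsto H (𝓝[Icc 0 N] 0) (𝓝 (H 0))
      rw [hH0]
      have hr : Tendsto (fun y : ℝ => y ^ (2 - α)) (𝓝[Icc 0 N] 0) (𝓝 0) := by
        have hc := (Real.continuousAt_rpow_const 0 (2 - α) (Or.inr (by linarith))).tendsto
        rw [Real.zero_rpow (by intro h; linarith [h] : (2:ℝ) - α ≠ 0)] at hc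
        exact hc.mono_left nhdsWithin_le_nhds
      have hlin : Tendsto (fun y : ℝ => y) (𝓝[Icc 0 N] 0) (𝓝 0) :=
        tendsto_id.mono_left nhdsWithin_le_nhds
      have hgten : Tendsto (fun y : ℝ => C / α * y ^ (2 - α)
          + |1 / (α * (α - 1))| * (C * y ^ (2 - α) + C * N ^ (1 - α) * y))
          (𝓝[Icc 0 N] 0) (𝓝 0) := by
        have := (hr.const_mul (C / α)).add
          (((hr.const_mul C).add (hlin.const_mul (C * N ^ (1 - α)))).const_mul (|1 / (α * (α - 1))|))
        simpa using this
      refine squeeze_zero_norm' ?_ hgten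
      filter_upwards [self_mem_nhdsWithin] with y hy'
      have hy0 : (0:ℝ) ≤ y := hy'.1
      have e2a : y ^ 2 * y ^ (-α) = y ^ (2 - α) := by
        rw [show (2:ℝ) - α = 2 + -α by ring, Real.rpow_add' hy0 (by intro h; linarith [h]),
          show ((2:ℝ)) = ((2:ℕ):ℝ) by norm_num, Real.rpow_natCast]
      have e2b : y ^ (1 - α) * y = y ^ (2 - α) := by
        rw [show (2:ℝ) - α = (1 - α) + 1 by ring, Real.rpow_add' hy0 (by intro h; linarith [h]),
          Real.rpow_one]
      have hpow : (0:ℝ) ≤ y ^ (-α) := Real.rpow_nonneg hy0 _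
      have hb1 : |(-(φ y * y ^ (-α)) / α)| ≤ C / α * y ^ (2 - α) := by
        rw [abs_div, abs_neg, abs_mul, abs_of_nonneg hpow, abs_of_pos hα0]
        rw [div_le_iff₀ hα0] at *
        calc |φ y| * y ^ (-α) ≤ (C * y ^ 2) * y ^ (-α) := by gcongr; exact hb y
          _ = C / α * y ^ (2 - α) * α := by rw [mul_assoc, e2a]; field_simp
      have hb2 : |1 / (α * (α - 1)) * ((y ^ (1 - α) - N ^ (1 - α)) * φ' y)|
          ≤ |1 / (α * (α - 1))| * (C * y ^ (2 - α) + C * N ^ (1 - α) * y) := by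
        rw [abs_mul]
        gcongr
        rw [abs_mul]
        have h1 : |y ^ (1 - α) - N ^ (1 - α)| ≤ y ^ (1 - α) + N ^ (1 - α) := by
          refine (abs_sub _ _).trans ?_
          rw [abs_of_nonneg (Real.rpow_nonneg hy0 _), abs_of_nonneg (Real.rpow_nonneg hN.le _)]
        calc |y ^ (1 - α) - N ^ (1 - α)| * |φ' y|
            ≤ (y ^ (1 - α) + N ^ (1 - α)) * (C * |y|) :=
              mul_le_mul h1 (hb' y) (abs_nonneg _) (by positivity)
          _ = C * (y ^ (1 - α) * y) + C * N ^ (1 - α) * y := by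
              rw [abs_of_nonneg hy0]; ring
          _ = C * y ^ (2 - α) + C * N ^ (1 - α) * y := by rw [e2b]
      calc ‖H y‖ ≤ |(-(φ y * y ^ (-α)) / α)|
            + |1 / (α * (α - 1)) * ((y ^ (1 - α) - N ^ (1 - α)) * φ' y)| := abs_sub _ _
        _ ≤ _ := add_le_add hb1 hb2
    · -- 0 < y
      refine ContinuousAt.continuousWithinAt ?_
      have c1 : ContinuousAt (fun z : ℝ => z ^ (-α)) y :=
        Real.continuousAt_rpow_const y (-α) (Or.inl h.ne')
      have c2 : ContinuousAt (fun z : ℝ => z ^ (1 - α)) y :=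
        Real.continuousAt_rpow_const y (1 - α) (Or.inl h.ne')
      exact ((hcφ.continuousAt.mul c1).neg.div_const α).sub
        (((c2.sub continuousAt_const).mul hcφ'.continuousAt).const_mul _)
  have Dint : IntervalIntegrable D volume 0 N := by
    rw [intervalIntegrable_iff_integrableOn_Ioc_of_le hN.le]
    exact J1.sub (J2.const_mul _)
  have key := intervalIntegral.integral_eq_sub_of_hasDeriv_right_of_le hN.le Hcont Hd Dint
  rw [intervalIntegral.integral_of_le hN.le] at key
  have hHN : H N = -(φ N * N ^ (-α)) / α := by simp [hH]
  have hH0 : H 0 = 0 := by simp [hH, h0, h0']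
  rw [hHN, hH0, hD] at key
  rw [show (fun y => φ y / y ^ (1 + α)
      - 1 / (α * (α - 1)) * ((y ^ (1 - α) - N ^ (1 - α)) * φ'' y))
    = (fun y => (fun y => φ y / y ^ (1 + α)) y
      - (fun y => 1 / (α * (α - 1)) * ((y ^ (1 - α) - N ^ (1 - α)) * φ'' y)) y) from rfl] at key
  rw [integral_sub J1 (J2.const_mul _), MeasureTheory.integral_const_mul] at key
  linear_combination key

lemma contOn_rpow (c : ℝ) {s : Set ℝ} (h : ∀ y ∈ s, y ≠ 0) :
    ContinuousOn (fun y : ℝ => y ^ c) s :=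
  fun y hy => (Real.continuousAt_rpow_const y c (Or.inl (h y hy))).continuousWithinAt

lemma negint {ψ : ℝ → ℝ} {s : Set ℝ}
    (h : IntegrableOn (fun y => ψ (-y)) (Neg.neg ⁻¹' s)) : IntegrableOn ψ s :=
  ((Measure.measurePreserving_neg (volume : Measure ℝ)).integrableOn_comp_preimage
    (Homeomorph.neg ℝ).measurableEmbedding).1 h


/-- The normalizing constant `d_α` of the 1d fractional Laplacian. -/
noncomputable def dAlpha (α : ℝ) : ℝ := (∫ y : ℝ, (1 - Real.cos y) / |y| ^ (1 + α))⁻¹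

/-- The fractional Laplacian `Δ^{α/2} f(x)` for functions with bounded `f', f''`. -/
noncomputable def fracLap (α : ℝ) (f : ℝ → ℝ) (x : ℝ) : ℝ :=
  dAlpha α * ∫ y : ℝ, (f (x + y) - f x - y * deriv f x) / |y| ^ (1 + α)

theorem stmt_4 (α : ℝ) (hα : α ∈ Set.Ioo (1:ℝ) 2) (N : ℝ) (hN : 0 < N)
    (f : ℝ → ℝ) (hf : ContDiff ℝ 2 f)
    (C₁ C₂ : ℝ) (h1 : ∀ x, |deriv f x| ≤ C₁) (h2 : ∀ x, |deriv (deriv f) x| ≤ C₂) (x : ℝ) :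
    fracLap α f x
      = (∫ t in Set.Ioc (-N) N,
            (dAlpha α / (α * (α - 1))) * (|t| ^ (1 - α) - N ^ (1 - α)) * deriv (deriv f) (x + t))
        + (dAlpha α / α) *
            ∫ z in {z : ℝ | N < |z|}, (deriv f (x + z) - deriv f x) / (Real.sign z * |z| ^ α) := by
  obtain ⟨hα1, hα2⟩ := hα
  have hα0 : (0:ℝ) < α := by linarith
  have hα1' : α - 1 ≠ 0 := sub_ne_zero.2 (by linarith)
  have hC₁ : 0 ≤ C₁ := le_trans (abs_nonneg _) (h1 0)
  have hC₂ : 0 ≤ C₂ := le_trans (abs_nonneg _) (h2 0)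
  -- regularity
  have hf' : ContDiff ℝ (1 + 1) f := by norm_num; exact hf
  obtain ⟨hdf, -, hfd1⟩ := contDiff_succ_iff_deriv.mp hf'
  obtain ⟨hdfd, hcfdd⟩ := contDiff_one_iff_deriv.mp hfd1
  have hcfd : Continuous (deriv f) := hfd1.continuous
  set g : ℝ → ℝ := fun y => f (x + y) - f x - y * deriv f x with hgdef
  set g' : ℝ → ℝ := fun y => deriv f (x + y) - deriv f x with hg'def
  set g'' : ℝ → ℝ := fun y => deriv (deriv f) (x + y) with hg''def
  have hgd : ∀ y, HasDerivAt g (g' y) y := by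
    intro y
    have hh : HasDerivAt (fun y : ℝ => f (x + y)) (deriv f (x + y)) y := by
      have := (HasDerivAt.comp y (hdf (x + y)).hasDerivAt ((hasDerivAt_id y).const_add x))
      simp at this; exact this
    have := (hh.sub_const (f x)).sub ((hasDerivAt_id y).mul_const (deriv f x))
    simp [hgdef, hg'def] at this; exact this
  have hgd' : ∀ y, HasDerivAt g' (g'' y) y := by
    intro y
    have hh : HasDerivAt (fun y : ℝ => deriv f (x + y)) (deriv (deriv f) (x + y)) y := by
      have := (HasDerivAt.comp y (hdfd (x + y)).hasDerivAt ((hasDerivAt_id y).const_add x))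
      simp at this; exact this
    simpa [hg'def, hg''def] using hh.sub_const (deriv f x)
  have hcg : Continuous g := continuous_iff_continuousAt.2 fun y => (hgd y).continuousAt
  have hcg' : Continuous g' := continuous_iff_continuousAt.2 fun y => (hgd' y).continuousAt
  -- MVT bounds
  have mvt : ∀ (F F' : ℝ → ℝ) (K : ℝ), (∀ t, HasDerivAt F (F' t) t) → (∀ t, |F' t| ≤ K) →
      ∀ u v : ℝ, |F v - F u| ≤ K * |v - u| := by
    intro F F' K hF hK u v
    have := Convex.norm_image_sub_le_of_norm_hasDerivWithin_le (f := F) (f' := F')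
      (s := Set.univ) (fun t _ => (hF t).hasDerivWithinAt)
      (fun t _ => by simpa [Real.norm_eq_abs] using hK t) convex_univ (Set.mem_univ u)
      (Set.mem_univ v)
    simpa [Real.norm_eq_abs] using this
  have hbg' : ∀ y, |g' y| ≤ C₂ * |y| := by
    intro y
    have := mvt (deriv f) (deriv (deriv f)) C₂ (fun t => (hdfd t).hasDerivAt) h2 x (x + y)
    simpa [hg'def] using this
  have hbg'2 : ∀ y, |g' y| ≤ 2 * C₁ := by
    intro y
    calc |g' y| ≤ |deriv f (x + y)| + |deriv f x| := abs_sub _ _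
      _ ≤ C₁ + C₁ := add_le_add (h1 _) (h1 _)
      _ = 2 * C₁ := by ring
  have hbg1 : ∀ y, |g y| ≤ 2 * C₁ * |y| := by
    intro y
    have hmv := mvt f (deriv f) C₁ (fun t => (hdf t).hasDerivAt) h1 x (x + y)
    calc |g y| ≤ |f (x + y) - f x| + |y * deriv f x| := abs_sub _ _
      _ ≤ C₁ * |y| + |y| * C₁ := by
          refine add_le_add (by simpa using hmv) ?_
          rw [abs_mul]
          exact mul_le_mul_of_nonneg_left (h1 x) (abs_nonneg y)
      _ = 2 * C₁ * |y| := by ring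
  have hbg2 : ∀ y, |g y| ≤ C₂ * y ^ 2 := by
    intro y
    have hsub : ∀ t ∈ Set.uIcc (0:ℝ) y, ‖g' t‖ ≤ C₂ * |y| := by
      intro t ht
      have hty : |t| ≤ |y| := by
        rcases Set.mem_uIcc.1 ht with ⟨ha, hb⟩ | ⟨ha, hb⟩
        · rw [abs_of_nonneg ha, abs_of_nonneg (ha.trans hb)]; exact hb
        · rw [abs_of_nonpos hb, abs_of_nonpos (le_trans ha hb)]; linarith
      rw [Real.norm_eq_abs]
      exact (hbg' t).trans (mul_le_mul_of_nonneg_left hty hC₂)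
    have := Convex.norm_image_sub_le_of_norm_hasDerivWithin_le (f := g) (f' := g')
      (s := Set.uIcc (0:ℝ) y) (fun t _ => (hgd t).hasDerivWithinAt) hsub (convex_uIcc (0:ℝ) y)
      Set.left_mem_uIcc Set.right_mem_uIcc
    have hg0 : g 0 = 0 := by simp [hgdef]
    rw [hg0, sub_zero, sub_zero, Real.norm_eq_abs, Real.norm_eq_abs] at this
    calc |g y| ≤ C₂ * |y| * |y| := this
      _ = C₂ * y ^ 2 := by rw [mul_assoc, abs_mul_abs_self, sq]
  -- pointwise bound helpers
  have bnd_tailA : ∀ (ψ : ℝ → ℝ) (K : ℝ), (∀ y, |ψ y| ≤ K * |y|) →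
      ∀ y ∈ Set.Ioi N, |ψ y / y ^ (1 + α)| ≤ K * y ^ (-α) := by
    intro ψ K hψ y hy
    have hy0 : (0:ℝ) < y := hN.trans hy
    have hp : (0:ℝ) < y ^ (1 + α) := Real.rpow_pos_of_pos hy0 _
    rw [abs_div, abs_of_pos hp, div_le_iff₀ hp]
    have e : y ^ (-α) * y ^ (1 + α) = y := by
      rw [← Real.rpow_add hy0]; norm_num
    calc |ψ y| ≤ K * |y| := hψ y
      _ = K * y ^ (-α) * y ^ (1 + α) := by rw [abs_of_pos hy0, mul_assoc, e]
  have bnd_tailB : ∀ (ψ : ℝ → ℝ) (K : ℝ), (∀ y, |ψ y| ≤ K) →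
      ∀ y ∈ Set.Ioi N, |ψ y / y ^ α| ≤ K * y ^ (-α) := by
    intro ψ K hψ y hy
    have hy0 : (0:ℝ) < y := hN.trans hy
    have hp : (0:ℝ) < y ^ α := Real.rpow_pos_of_pos hy0 _
    rw [abs_div, abs_of_pos hp, div_le_iff₀ hp]
    have e : y ^ (-α) * y ^ α = 1 := by
      rw [← Real.rpow_add hy0]; norm_num
    calc |ψ y| ≤ K := hψ y
      _ = K * (y ^ (-α) * y ^ α) := by rw [e, mul_one]
      _ = K * y ^ (-α) * y ^ α := by ring
  have bnd_midA : ∀ (ψ : ℝ → ℝ) (K : ℝ), (∀ y, |ψ y| ≤ K * y ^ 2) →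
      ∀ y ∈ Set.Ioc (0:ℝ) N, |ψ y / y ^ (1 + α)| ≤ K * y ^ (1 - α) + 0 := by
    intro ψ K hψ y hy
    have hy0 : (0:ℝ) < y := hy.1
    have hp : (0:ℝ) < y ^ (1 + α) := Real.rpow_pos_of_pos hy0 _
    rw [add_zero, abs_div, abs_of_pos hp, div_le_iff₀ hp]
    have e : y ^ (1 - α) * y ^ (1 + α) = y ^ 2 := by
      rw [← Real.rpow_add hy0, show (1 - α) + (1 + α) = ((2:ℕ):ℝ) by norm_num,
        Real.rpow_natCast]
    calc |ψ y| ≤ K * y ^ 2 := hψ y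
      _ = K * y ^ (1 - α) * y ^ (1 + α) := by rw [mul_assoc, e]
  have bnd_midB : ∀ (ψ : ℝ → ℝ) (K : ℝ), 0 ≤ K → (∀ y, |ψ y| ≤ K) →
      ∀ y ∈ Set.Ioc (0:ℝ) N,
        |(y ^ (1 - α) - N ^ (1 - α)) * ψ y| ≤ K * y ^ (1 - α) + K * N ^ (1 - α) := by
    intro ψ K hK hψ y hy
    have hy0 : (0:ℝ) ≤ y := hy.1.le
    rw [abs_mul]
    have hs : |y ^ (1 - α) - N ^ (1 - α)| ≤ y ^ (1 - α) + N ^ (1 - α) := by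
      refine (abs_sub _ _).trans ?_
      rw [abs_of_nonneg (Real.rpow_nonneg hy0 _), abs_of_nonneg (Real.rpow_nonneg hN.le _)]
    calc |y ^ (1 - α) - N ^ (1 - α)| * |ψ y| ≤ (y ^ (1 - α) + N ^ (1 - α)) * K :=
        mul_le_mul hs (hψ y) (abs_nonneg _) (by positivity)
      _ = K * y ^ (1 - α) + K * N ^ (1 - α) := by ring
  have ne_Ioi : ∀ y ∈ Set.Ioi N, y ≠ 0 := fun y hy => (hN.trans hy).ne'
  have ne_Ioc : ∀ y ∈ Set.Ioc (0:ℝ) N, y ≠ 0 := fun y hy => hy.1.ne'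
  have hcg'' : Continuous g'' := hcfdd.comp (continuous_const.add continuous_id)
  have hbg'' : ∀ y, |g'' y| ≤ C₂ := fun y => h2 _
  -- integrability, positive side
  have IP1 : IntegrableOn (fun y => g y / y ^ (1 + α)) (Set.Ioi N) :=
    int_tail hα1 hN (hcg.continuousOn.div (contOn_rpow _ ne_Ioi)
      (fun y hy => (Real.rpow_pos_of_pos (hN.trans hy) _).ne')) (bnd_tailA g (2 * C₁) hbg1)
  have IP2 : IntegrableOn (fun y => g' y / y ^ α) (Set.Ioi N) :=
    int_tail hα1 hN (hcg'.continuousOn.div (contOn_rpow _ ne_Ioi)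
      (fun y hy => (Real.rpow_pos_of_pos (hN.trans hy) _).ne')) (bnd_tailB g' (2 * C₁) hbg'2)
  have IM1 : IntegrableOn (fun y => g y / y ^ (1 + α)) (Set.Ioc 0 N) :=
    int_mid hα2 hN (hcg.continuousOn.div (contOn_rpow _ ne_Ioc)
      (fun y hy => (Real.rpow_pos_of_pos hy.1 _).ne')) (bnd_midA g C₂ hbg2)
  have IM2 : IntegrableOn (fun y => (y ^ (1 - α) - N ^ (1 - α)) * g'' y) (Set.Ioc 0 N) :=
    int_mid hα2 hN (((contOn_rpow _ ne_Ioc).sub continuousOn_const).mul hcg''.continuousOn)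
      (bnd_midB g'' C₂ hC₂ hbg'')
  -- negative-side reflected functions
  have hgdneg : ∀ y, HasDerivAt (fun z => g (-z)) (-g' (-y)) y := by
    intro y
    have := (hgd (-y)).comp y ((hasDerivAt_id y).neg)
    simp [Function.comp] at this; exact this
  have hgdneg' : ∀ y, HasDerivAt (fun z => -g' (-z)) (g'' (-y)) y := by
    intro y
    have := ((hgd' (-y)).comp y ((hasDerivAt_id y).neg)).neg
    simp [Function.comp] at this; exact this
  have hbg1n : ∀ y, |g (-y)| ≤ 2 * C₁ * |y| := fun y => by simpa [abs_neg] using hbg1 (-y)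
  have hbg2n : ∀ y, |g (-y)| ≤ C₂ * y ^ 2 := fun y => by simpa using hbg2 (-y)
  have hbg'n : ∀ y, |(-g' (-y))| ≤ C₂ * |y| := fun y => by simpa [abs_neg] using hbg' (-y)
  have hbg'2n : ∀ y, |(-g' (-y))| ≤ 2 * C₁ := fun y => by simpa [abs_neg] using hbg'2 (-y)
  have hbg''n : ∀ y, |g'' (-y)| ≤ C₂ := fun y => h2 _
  have hcgn : Continuous fun z : ℝ => g (-z) := hcg.comp continuous_neg
  have hcg'n : Continuous fun z : ℝ => -g' (-z) := (hcg'.comp continuous_neg).neg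
  have hcg''n : Continuous fun z : ℝ => g'' (-z) := hcg''.comp continuous_neg
  have IP1n : IntegrableOn (fun y => g (-y) / y ^ (1 + α)) (Set.Ioi N) :=
    int_tail hα1 hN (hcgn.continuousOn.div (contOn_rpow _ ne_Ioi)
      (fun y hy => (Real.rpow_pos_of_pos (hN.trans hy) _).ne'))
      (bnd_tailA (fun y => g (-y)) (2 * C₁) hbg1n)
  have IP2n : IntegrableOn (fun y => -g' (-y) / y ^ α) (Set.Ioi N) :=
    int_tail hα1 hN (hcg'n.continuousOn.div (contOn_rpow _ ne_Ioi)
      (fun y hy => (Real.rpow_pos_of_pos (hN.trans hy) _).ne'))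
      (bnd_tailB (fun y => -g' (-y)) (2 * C₁) hbg'2n)
  have IM1n : IntegrableOn (fun y => g (-y) / y ^ (1 + α)) (Set.Ioc 0 N) :=
    int_mid hα2 hN (hcgn.continuousOn.div (contOn_rpow _ ne_Ioc)
      (fun y hy => (Real.rpow_pos_of_pos hy.1 _).ne'))
      (bnd_midA (fun y => g (-y)) C₂ hbg2n)
  have IM2n : IntegrableOn (fun y => (y ^ (1 - α) - N ^ (1 - α)) * g'' (-y)) (Set.Ioc 0 N) :=
    int_mid hα2 hN (((contOn_rpow _ ne_Ioc).sub continuousOn_const).mul hcg''n.continuousOn)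
      (bnd_midB (fun y => g'' (-y)) C₂ hC₂ hbg''n)
  -- the four integration-by-parts identities
  have TP := tail_ibp hα1 hN hgd IP1 IP2 hbg1
  have TM := tail_ibp (φ := fun z => g (-z)) (φ' := fun z => -g' (-z)) hα1 hN hgdneg IP1n IP2n hbg1n
  have MP := mid_ibp hα1 hα2 hN hgd hgd' IM1 IM2 (by simp [hgdef]) (by simp [hg'def]) hbg2 hbg'
  have MM := mid_ibp (φ := fun z => g (-z)) (φ' := fun z => -g' (-z)) (φ'' := fun z => g'' (-z))
    hα1 hα2 hN hgdneg hgdneg' IM1n IM2n (by simp [hgdef]) (by simp [hg'def]) hbg2n hbg'n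
  -- abbreviate the two target integrands
  set KF : ℝ → ℝ := fun t =>
    dAlpha α / (α * (α - 1)) * (|t| ^ (1 - α) - N ^ (1 - α)) * deriv (deriv f) (x + t) with hKF
  set TF : ℝ → ℝ := fun z =>
    (deriv f (x + z) - deriv f x) / (Real.sign z * |z| ^ α) with hTF
  set G : ℝ → ℝ := fun z => g z / |z| ^ (1 + α) with hG
  -- preimage computations
  have hpre1 : (Neg.neg ⁻¹' Set.Iic (-N) : Set ℝ) = Set.Ici N := by
    ext z
    simp only [Set.mem_preimage, Set.mem_Iic, Set.mem_Ici, neg_le_neg_iff]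
  have hpre2 : (Neg.neg ⁻¹' Set.Ioc (-N) 0 : Set ℝ) = Set.Ico 0 N := by
    ext z
    simp only [Set.mem_preimage, Set.mem_Ioc, Set.mem_Ico]
    constructor
    · rintro ⟨h1, h2⟩; constructor <;> linarith
    · rintro ⟨h1, h2⟩; constructor <;> linarith
  -- integrability of G on the four pieces
  have iG3 : IntegrableOn G (Set.Ioc 0 N) :=
    IM1.congr_fun (fun z hz => by simp only [hG]; rw [abs_of_pos hz.1]) measurableSet_Ioc
  have iG4 : IntegrableOn G (Set.Ioi N) :=
    IP1.congr_fun (fun z hz => by simp only [hG]; rw [abs_of_pos (hN.trans hz)]) measurableSet_Ioi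
  have iG1 : IntegrableOn G (Set.Iic (-N)) := by
    apply negint
    rw [hpre1, integrableOn_Ici_iff_integrableOn_Ioi]
    exact IP1n.congr_fun
      (fun z hz => by simp only [hG]; rw [abs_neg, abs_of_pos (hN.trans hz)]) measurableSet_Ioi
  have iG2 : IntegrableOn G (Set.Ioc (-N) 0) := by
    apply negint
    rw [hpre2, integrableOn_Ico_iff_integrableOn_Ioo]
    exact (IM1n.mono_set Set.Ioo_subset_Ioc_self).congr_fun
      (fun z hz => by simp only [hG]; rw [abs_neg, abs_of_pos hz.1]) measurableSet_Ioo
  -- split the full integral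
  have splitG : ∫ z, G z = ((∫ z in Set.Iic (-N), G z) + ∫ z in Set.Ioc (-N) 0, G z)
      + ((∫ z in Set.Ioc 0 N, G z) + ∫ z in Set.Ioi N, G z) := by
    have u1 : IntegrableOn G (Set.Iic 0) :=
      (Set.Iic_union_Ioc_eq_Iic (show -N ≤ (0:ℝ) by linarith)) ▸ iG1.union iG2
    have u2 : IntegrableOn G (Set.Ioi 0) :=
      (Set.Ioc_union_Ioi_eq_Ioi hN.le) ▸ iG3.union iG4
    rw [← intervalIntegral.integral_Iic_add_Ioi u1 u2]
    congr 1
    · rw [← Set.Iic_union_Ioc_eq_Iic (show -N ≤ (0:ℝ) by linarith),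
        setIntegral_union (Set.Iic_disjoint_Ioc le_rfl) measurableSet_Ioc iG1 iG2]
    · rw [← Set.Ioc_union_Ioi_eq_Ioi hN.le,
        setIntegral_union Set.Ioc_disjoint_Ioi_same measurableSet_Ioi iG3 iG4]
  -- convert each piece
  have cTM : ∫ z in Set.Iic (-N), G z = ∫ y in Set.Ioi N, g (-y) / y ^ (1 + α) := by
    rw [← integral_comp_neg_Ioi]
    exact setIntegral_congr_fun measurableSet_Ioi
      (fun y hy => by simp only [hG]; rw [abs_neg, abs_of_pos (hN.trans hy)])
  have cMM : ∫ z in Set.Ioc (-N) 0, G z = ∫ y in Set.Ioc 0 N, g (-y) / y ^ (1 + α) := by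
    rw [← intervalIntegral.integral_of_le (show -N ≤ (0:ℝ) by linarith)]
    have hcn := intervalIntegral.integral_comp_neg (a := (0:ℝ)) (b := N) (f := G)
    rw [neg_zero] at hcn
    rw [← hcn, intervalIntegral.integral_of_le hN.le]
    exact setIntegral_congr_fun measurableSet_Ioc
      (fun y hy => by simp only [hG]; rw [abs_neg, abs_of_pos hy.1])
  have cMP : ∫ z in Set.Ioc 0 N, G z = ∫ z in Set.Ioc 0 N, g z / z ^ (1 + α) :=
    setIntegral_congr_fun measurableSet_Ioc (fun z hz => by simp only [hG]; rw [abs_of_pos hz.1])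
  have cTP : ∫ z in Set.Ioi N, G z = ∫ z in Set.Ioi N, g z / z ^ (1 + α) :=
    setIntegral_congr_fun measurableSet_Ioi (fun z hz => by simp only [hG]; rw [abs_of_pos (hN.trans hz)])
  -- restated IBP identities (beta-reduced forms)
  have TM' : ∫ y in Set.Ioi N, g (-y) / y ^ (1 + α)
      = g (-N) * N ^ (-α) / α + 1 / α * ∫ y in Set.Ioi N, -g' (-y) / y ^ α := TM
  have MM' : ∫ y in Set.Ioc 0 N, g (-y) / y ^ (1 + α)
      = -(g (-N) * N ^ (-α) / α)
        + 1 / (α * (α - 1)) * ∫ y in Set.Ioc 0 N, (y ^ (1 - α) - N ^ (1 - α)) * g'' (-y) := MM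
  -- tail target conversions
  have hsetT : {z : ℝ | N < |z|} = Set.Iio (-N) ∪ Set.Ioi N := by
    ext z
    simp only [Set.mem_setOf_eq, Set.mem_union, Set.mem_Iio, Set.mem_Ioi, lt_abs]
    constructor
    · rintro (h | h)
      exacts [Or.inr h, Or.inl (by linarith)]
    · rintro (h | h)
      exacts [Or.inr (by linarith), Or.inl h]
  have intT2 : IntegrableOn TF (Set.Ioi N) := by
    refine IP2.congr_fun (fun z hz => ?_) measurableSet_Ioi
    have hz0 : (0:ℝ) < z := hN.trans hz
    simp only [hTF]
    rw [Real.sign_of_pos hz0, one_mul, abs_of_pos hz0]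
  have intT1 : IntegrableOn TF (Set.Iic (-N)) := by
    apply negint
    rw [hpre1, integrableOn_Ici_iff_integrableOn_Ioi]
    refine IP2n.congr_fun (fun z hz => ?_) measurableSet_Ioi
    have hz0 : (0:ℝ) < z := hN.trans hz
    simp only [hTF]
    rw [Real.sign_of_neg (by linarith : -z < 0), abs_neg, abs_of_pos hz0, neg_one_mul,
      div_neg, neg_div]
  have ST : ∫ z in {z : ℝ | N < |z|}, TF z
      = (∫ z in Set.Iic (-N), TF z) + ∫ z in Set.Ioi N, TF z := by
    have hdisj : Disjoint (Set.Iio (-N)) (Set.Ioi N) := by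
      refine Set.disjoint_left.2 fun z h1 h2 => ?_
      simp only [Set.mem_Iio] at h1
      simp only [Set.mem_Ioi] at h2
      linarith
    rw [hsetT, setIntegral_union hdisj measurableSet_Ioi
      (intT1.mono_set Set.Iio_subset_Iic_self) intT2, ← integral_Iic_eq_integral_Iio]
  have cT1 : ∫ z in Set.Iic (-N), TF z = ∫ y in Set.Ioi N, -g' (-y) / y ^ α := by
    rw [← integral_comp_neg_Ioi]
    refine setIntegral_congr_fun measurableSet_Ioi fun y hy => ?_
    have hy0 : (0:ℝ) < y := hN.trans hy
    simp only [hTF]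
    rw [Real.sign_of_neg (by linarith : -y < 0), abs_neg, abs_of_pos hy0, neg_one_mul,
      div_neg, neg_div]
  have cT2 : ∫ z in Set.Ioi N, TF z = ∫ z in Set.Ioi N, g' z / z ^ α := by
    refine setIntegral_congr_fun measurableSet_Ioi fun z hz => ?_
    have hz0 : (0:ℝ) < z := hN.trans hz
    simp only [hTF]
    rw [Real.sign_of_pos hz0, one_mul, abs_of_pos hz0]
  -- K target conversions
  have intK2 : IntegrableOn KF (Set.Ioc 0 N) := by
    refine int_mid (C := |dAlpha α / (α * (α - 1))| * C₂)
      (C' := |dAlpha α / (α * (α - 1))| * C₂ * N ^ (1 - α)) hα2 hN ?_ ?_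
    · refine (continuousOn_const.mul (ContinuousOn.sub ?_ continuousOn_const)).mul
        hcg''.continuousOn
      exact (contOn_rpow (1 - α) ne_Ioc).congr (fun t ht => by rw [abs_of_pos ht.1])
    · intro y hy
      simp only [hKF]
      rw [show |y| = y from abs_of_pos hy.1, mul_assoc, abs_mul]
      calc |dAlpha α / (α * (α - 1))| * |(y ^ (1 - α) - N ^ (1 - α)) * g'' y|
          ≤ |dAlpha α / (α * (α - 1))| * (C₂ * y ^ (1 - α) + C₂ * N ^ (1 - α)) :=
            mul_le_mul_of_nonneg_left (bnd_midB g'' C₂ hC₂ hbg'' y hy) (abs_nonneg _)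
        _ = |dAlpha α / (α * (α - 1))| * C₂ * y ^ (1 - α)
            + |dAlpha α / (α * (α - 1))| * C₂ * N ^ (1 - α) := by ring
  have intK1 : IntegrableOn KF (Set.Ioc (-N) 0) := by
    apply negint
    rw [hpre2, integrableOn_Ico_iff_integrableOn_Ioo]
    refine IntegrableOn.mono_set ?_ Set.Ioo_subset_Ioc_self
    refine int_mid (C := |dAlpha α / (α * (α - 1))| * C₂)
      (C' := |dAlpha α / (α * (α - 1))| * C₂ * N ^ (1 - α)) hα2 hN ?_ ?_
    · refine (continuousOn_const.mul (ContinuousOn.sub ?_ continuousOn_const)).mul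
        (hcg''n.continuousOn)
      exact (contOn_rpow (1 - α) ne_Ioc).congr (fun t ht => by rw [abs_neg, abs_of_pos ht.1])
    · intro y hy
      simp only [hKF]
      rw [show |(-y)| = y from by rw [abs_neg]; exact abs_of_pos hy.1, mul_assoc, abs_mul]
      calc |dAlpha α / (α * (α - 1))| * |(y ^ (1 - α) - N ^ (1 - α)) * g'' (-y)|
          ≤ |dAlpha α / (α * (α - 1))| * (C₂ * y ^ (1 - α) + C₂ * N ^ (1 - α)) :=
            mul_le_mul_of_nonneg_left
              (bnd_midB (fun z => g'' (-z)) C₂ hC₂ hbg''n y hy) (abs_nonneg _)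
        _ = |dAlpha α / (α * (α - 1))| * C₂ * y ^ (1 - α)
            + |dAlpha α / (α * (α - 1))| * C₂ * N ^ (1 - α) := by ring
  have SK : ∫ t in Set.Ioc (-N) N, KF t
      = (∫ t in Set.Ioc (-N) 0, KF t) + ∫ t in Set.Ioc 0 N, KF t := by
    rw [← Set.Ioc_union_Ioc_eq_Ioc (show -N ≤ (0:ℝ) by linarith) hN.le,
      setIntegral_union (Set.Ioc_disjoint_Ioc_of_le le_rfl) measurableSet_Ioc intK1 intK2]
  have cK2 : ∫ t in Set.Ioc 0 N, KF t
      = dAlpha α / (α * (α - 1)) * ∫ y in Set.Ioc 0 N, (y ^ (1 - α) - N ^ (1 - α)) * g'' y := by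
    rw [← MeasureTheory.integral_const_mul]
    refine setIntegral_congr_fun measurableSet_Ioc fun t ht => ?_
    simp only [hKF]
    rw [abs_of_pos ht.1, mul_assoc]
  have cK1 : ∫ t in Set.Ioc (-N) 0, KF t
      = dAlpha α / (α * (α - 1))
        * ∫ y in Set.Ioc 0 N, (y ^ (1 - α) - N ^ (1 - α)) * g'' (-y) := by
    rw [← intervalIntegral.integral_of_le (show -N ≤ (0:ℝ) by linarith)]
    have hcn := intervalIntegral.integral_comp_neg (a := (0:ℝ)) (b := N) (f := KF)
    rw [neg_zero] at hcn
    rw [← hcn, intervalIntegral.integral_of_le hN.le, ← MeasureTheory.integral_const_mul]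
    refine setIntegral_congr_fun measurableSet_Ioc fun t ht => ?_
    simp only [hKF]
    rw [abs_neg, abs_of_pos ht.1, mul_assoc]
  -- final assembly
  rw [show fracLap α f x = dAlpha α * ∫ z : ℝ, G z from rfl]
  rw [splitG, cTM, cMM, cMP, cTP, TM', MM', MP, TP, SK, cK1, cK2, ST, cT1, cT2]
  ring
end

section
/- Let ζ₁,…,ζₙ be independent integrable real random variables with E[ζᵢ]=0, let Sₙ = ζ₁+⋯+ζₙ, Sₙ(i) = Sₙ − ζᵢ, and let f : ℝ → ℝ be twice continuously differentiable with bounded f', f''. Then for every N > 0, E[Sₙ f'(Sₙ)] = Σ_{i=1}^n ∫_{−N}^N K_i(t,N) E[f''(Sₙ(i)+t)] dt + Σ_{i=1}^n E[ζᵢ (f'(Sₙ) − f'(Sₙ(i))) 1_{|ζᵢ|>N}], where K_i(t,N) = E[ζᵢ 1_{0≤t≤ζᵢ≤N} − ζᵢ 1_{−N≤ζᵢ≤t≤0}]. -/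
open MeasureTheory ProbabilityTheory

theorem stmt_6 {Ω : Type*} [MeasurableSpace Ω] (μ : Measure Ω) [IsProbabilityMeasure μ]
    (n : ℕ) (ζ : Fin n → Ω → ℝ) (hmeas : ∀ i, Measurable (ζ i))
    (hint : ∀ i, Integrable (ζ i) μ) (hmean : ∀ i, ∫ ω, ζ i ω ∂μ = 0)
    (hindep : iIndepFun ζ μ)
    (f : ℝ → ℝ) (hf : ContDiff ℝ 2 f)
    (C₁ C₂ : ℝ) (h1 : ∀ x, |deriv f x| ≤ C₁) (h2 : ∀ x, |deriv (deriv f) x| ≤ C₂)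
    (N : ℝ) (hN : 0 < N)
    (S : Ω → ℝ) (hS : S = fun ω => ∑ i, ζ i ω)
    (K : Fin n → ℝ → ℝ)
    (hK : K = fun i t => ∫ ω,
        ({ω | 0 ≤ t ∧ t ≤ ζ i ω ∧ ζ i ω ≤ N}.indicator (ζ i) ω
          - {ω | -N ≤ ζ i ω ∧ ζ i ω ≤ t ∧ t ≤ 0}.indicator (ζ i) ω) ∂μ) :
    ∫ ω, S ω * deriv f (S ω) ∂μ
      = (∑ i, ∫ t in Set.Ioc (-N) N, K i t * ∫ ω, deriv (deriv f) (S ω - ζ i ω + t) ∂μ)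
        + ∑ i, ∫ ω,
            {ω | N < |ζ i ω|}.indicator
              (fun ω => ζ i ω * (deriv f (S ω) - deriv f (S ω - ζ i ω))) ω ∂μ := by
  classical
  -- smoothness facts
  have hf1 : ContDiff ℝ 1 (deriv f) := by
    have h := contDiff_succ_iff_deriv.mp (show ContDiff ℝ ((1:WithTop ℕ∞)+1) f from by
      rw [show ((1:WithTop ℕ∞)+1) = 2 from by norm_num]; exact hf)
    exact h.2.2
  have hdf : Differentiable ℝ (deriv f) := hf1.differentiable one_ne_zero
  have hcf' : Continuous (deriv f) := hf1.continuous
  have hcf'' : Continuous (deriv (deriv f)) := (contDiff_one_iff_deriv.mp hf1).2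
  have hSm : Measurable S := by
    rw [hS]; exact Finset.measurable_sum _ fun i _ => hmeas i
  have hC₂0 : 0 ≤ C₂ := le_trans (abs_nonneg _) (h2 0)
  -- FTC helper
  have FTC : ∀ x a b : ℝ, (∫ t in a..b, deriv (deriv f) (x + t))
      = deriv f (x + b) - deriv f (x + a) := by
    intro x a b
    apply intervalIntegral.integral_eq_sub_of_hasDerivAt
    · intro t _
      have hg : HasDerivAt (deriv f) (deriv (deriv f) (x + t)) (x + t) :=
        (hdf (x + t)).hasDerivAt
      have hh : HasDerivAt (fun t : ℝ => x + t) 1 t := (hasDerivAt_id t).const_add x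
      simpa [Function.comp_def] using hg.comp t hh
    · exact (hcf''.comp (continuous_const.add continuous_id)).intervalIntegrable _ _
  -- integral over an interval inside (-N, N]
  have hIcc : ∀ (a b c x : ℝ), -N ≤ a → a ≤ b → b ≤ N →
      (∫ t in Set.Ioc (-N) N, (if a ≤ t ∧ t ≤ b then c else 0) * deriv (deriv f) (x + t))
        = c * (deriv f (x + b) - deriv f (x + a)) := by
    intro a b c x ha hab hb
    have e : ∀ t : ℝ, (if a ≤ t ∧ t ≤ b then c else 0) * deriv (deriv f) (x + t)
        = Set.indicator (Set.Icc a b) (fun t => c * deriv (deriv f) (x + t)) t := by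
      intro t
      by_cases h : a ≤ t ∧ t ≤ b
      · simp [Set.indicator_apply, Set.mem_Icc, h]
      · simp [Set.indicator_apply, Set.mem_Icc, h]
    simp only [e]
    rw [MeasureTheory.integral_indicator measurableSet_Icc,
      Measure.restrict_restrict measurableSet_Icc]
    have hae : (Set.Icc a b ∩ Set.Ioc (-N) N : Set ℝ) =ᵐ[volume] (Set.Ioc a b : Set ℝ) := by
      rw [MeasureTheory.ae_eq_set]
      constructor
      · refine measure_mono_null (fun t ht => ?_) (measure_singleton a)
        rcases ht with ⟨⟨ht1, ht2⟩, hnot⟩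
        simp only [Set.mem_Ioc, not_and_or, not_lt, not_le] at hnot
        have : t = a := by
          rcases hnot with h' | h'
          · exact le_antisymm h' ht1.1
          · linarith [ht1.2, h']
        simpa using this
      · refine measure_mono_null (fun t ht => ?_) (measure_empty (μ := volume))
        rcases ht with ⟨⟨ht1, ht2⟩, hnot⟩
        exact absurd ⟨⟨le_of_lt ht1, ht2⟩, ⟨lt_of_le_of_lt ha ht1, le_trans ht2 hb⟩⟩ hnot
    rw [Measure.restrict_congr_set hae, ← intervalIntegral.integral_of_le hab,
      intervalIntegral.integral_const_mul, FTC]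
  -- pointwise identity in z
  have key : ∀ z x : ℝ,
      (∫ t in Set.Ioc (-N) N,
          ((if 0 ≤ t ∧ t ≤ z ∧ z ≤ N then z else 0)
            - (if -N ≤ z ∧ z ≤ t ∧ t ≤ 0 then z else 0)) * deriv (deriv f) (x + t))
        = (if |z| ≤ N then z * (deriv f (x + z) - deriv f x) else 0) := by
    intro z x
    rcases le_or_gt z N with hzN | hzN
    · rcases le_or_gt (-N) z with hNz | hNz
      · have habs : |z| ≤ N := abs_le.mpr ⟨hNz, hzN⟩
        rw [if_pos habs]
        rcases le_or_gt 0 z with hz0 | hz0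
        · have e : ∀ t : ℝ, ((if 0 ≤ t ∧ t ≤ z ∧ z ≤ N then z else 0)
              - (if -N ≤ z ∧ z ≤ t ∧ t ≤ 0 then z else 0))
              = (if 0 ≤ t ∧ t ≤ z then z else 0) := by
            intro t
            have e2 : (if -N ≤ z ∧ z ≤ t ∧ t ≤ 0 then z else 0) = 0 := by
              split_ifs with h
              · exact le_antisymm (h.2.1.trans h.2.2) hz0
              · rfl
            have e1 : (if 0 ≤ t ∧ t ≤ z ∧ z ≤ N then z else 0)
                = (if 0 ≤ t ∧ t ≤ z then z else 0) := by
              by_cases h : 0 ≤ t ∧ t ≤ z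
              · rw [if_pos ⟨h.1, h.2, hzN⟩, if_pos h]
              · rw [if_neg (fun hc => h ⟨hc.1, hc.2.1⟩), if_neg h]
            rw [e1, e2, sub_zero]
          simp only [e]
          rw [hIcc 0 z z x (by linarith) hz0 hzN, add_zero]
        · have e : ∀ t : ℝ, ((if 0 ≤ t ∧ t ≤ z ∧ z ≤ N then z else 0)
              - (if -N ≤ z ∧ z ≤ t ∧ t ≤ 0 then z else 0))
              = (if z ≤ t ∧ t ≤ 0 then -z else 0) := by
            intro t
            have e1 : (if 0 ≤ t ∧ t ≤ z ∧ z ≤ N then z else 0) = 0 := by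
              split_ifs with h
              · linarith [h.1, h.2.1]
              · rfl
            have e2 : (if -N ≤ z ∧ z ≤ t ∧ t ≤ 0 then z else 0)
                = (if z ≤ t ∧ t ≤ 0 then z else 0) := by
              by_cases h : z ≤ t ∧ t ≤ 0
              · rw [if_pos ⟨hNz, h.1, h.2⟩, if_pos h]
              · rw [if_neg (fun hc => h hc.2), if_neg h]
            rw [e1, e2, zero_sub]
            split_ifs <;> simp
          simp only [e]
          rw [hIcc z 0 (-z) x hNz (le_of_lt hz0) (by linarith), add_zero]
          ring
      · rw [if_neg (by rw [abs_le]; push_neg; intro h; linarith)]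
        have e : ∀ t : ℝ, ((if 0 ≤ t ∧ t ≤ z ∧ z ≤ N then z else 0)
            - (if -N ≤ z ∧ z ≤ t ∧ t ≤ 0 then z else 0)) * deriv (deriv f) (x + t) = 0 := by
          intro t
          rw [if_neg (fun h => by linarith [h.1, h.2.1] : ¬(0 ≤ t ∧ t ≤ z ∧ z ≤ N)),
            if_neg (fun h => by linarith [h.1] : ¬(-N ≤ z ∧ z ≤ t ∧ t ≤ 0)), sub_zero, zero_mul]
        simp only [e, integral_zero]
    · rw [if_neg (by rw [abs_le]; push_neg; intro h; linarith)]
      have e : ∀ t : ℝ, ((if 0 ≤ t ∧ t ≤ z ∧ z ≤ N then z else 0)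
          - (if -N ≤ z ∧ z ≤ t ∧ t ≤ 0 then z else 0)) * deriv (deriv f) (x + t) = 0 := by
        intro t
        rw [if_neg (fun h => by linarith [h.2.2] : ¬(0 ≤ t ∧ t ≤ z ∧ z ≤ N)),
          if_neg (fun h => by linarith [h.2.1, h.2.2] : ¬(-N ≤ z ∧ z ≤ t ∧ t ≤ 0)), sub_zero, zero_mul]
      simp only [e, integral_zero]
  -- integrability of ζ i * (bounded measurable)
  have hprod_int : ∀ (i : Fin n) (g : Ω → ℝ), Measurable g →
      Integrable (fun ω => ζ i ω * deriv f (g ω)) μ := by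
    intro i g hg
    refine ((hint i).abs.const_mul C₁).mono'
      ((hmeas i).mul (hcf'.measurable.comp hg)).aestronglyMeasurable
      (ae_of_all _ fun ω => ?_)
    rw [Real.norm_eq_abs, abs_mul, mul_comm]
    exact mul_le_mul_of_nonneg_right (h1 _) (abs_nonneg _)
  have hite_int : ∀ (g : Ω → ℝ) (p : Ω → Prop), Integrable g μ → MeasurableSet {ω | p ω} →
      Integrable (fun ω => if p ω then g ω else 0) μ := by
    intro g p hg hp
    have e : (fun ω => if p ω then g ω else 0) = {ω | p ω}.indicator g := by
      funext ω; simp [Set.indicator_apply, Set.mem_setOf_eq]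
    rw [e]; exact hg.indicator hp
  have hφ_bd : ∀ z t : ℝ,
      |(if 0 ≤ t ∧ t ≤ z ∧ z ≤ N then z else 0) - (if -N ≤ z ∧ z ≤ t ∧ t ≤ 0 then z else 0)| ≤ N := by
    intro z t
    split_ifs with hc1 hc2 hc2
    · simpa using hN.le
    · rw [sub_zero]; exact abs_le.mpr ⟨by linarith [hc1.1, hc1.2.1], hc1.2.2⟩
    · rw [zero_sub, abs_neg]; exact abs_le.mpr ⟨hc2.1, by linarith [hc2.2.1, hc2.2.2]⟩
    · simpa using hN.le
  haveI : IsFiniteMeasure (volume.restrict (Set.Ioc (-N) N)) :=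
    ⟨by rw [Measure.restrict_apply_univ]; exact measure_Ioc_lt_top⟩
  -- per-i computation
  have hi_eq : ∀ i : Fin n,
      ∫ ω, ζ i ω * deriv f (S ω) ∂μ
        = (∫ t in Set.Ioc (-N) N, K i t * ∫ ω, deriv (deriv f) (S ω - ζ i ω + t) ∂μ)
          + ∫ ω, {ω | N < |ζ i ω|}.indicator
              (fun ω => ζ i ω * (deriv f (S ω) - deriv f (S ω - ζ i ω))) ω ∂μ := by
    intro i
    set T : Ω → ℝ := fun ω => S ω - ζ i ω with hT_def
    have hTm : Measurable T := hSm.sub (hmeas i)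
    -- independence of ζ i and T
    have hTsum : T = ∑ j ∈ Finset.univ.erase i, ζ j := by
      funext ω
      have := Finset.sum_erase_add Finset.univ (fun j => ζ j ω) (Finset.mem_univ i)
      have e2 : (∑ j ∈ Finset.univ.erase i, ζ j) ω = ∑ j ∈ Finset.univ.erase i, ζ j ω := by
        simp [Finset.sum_apply]
      rw [hT_def]; dsimp only; rw [hS]; dsimp only; rw [e2]; linarith [this]
    have hindep_i : IndepFun (ζ i) T μ := by
      rw [hTsum]
      exact (hindep.indepFun_finsetSum_of_notMem hmeas (Finset.notMem_erase i _)).symm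
    -- E[ζ i * f'(T)] = 0
    have hzero : ∫ ω, ζ i ω * deriv f (T ω) ∂μ = 0 := by
      have hc : IndepFun (ζ i) (fun ω => deriv f (T ω)) μ :=
        hindep_i.comp measurable_id hcf'.measurable
      have := hc.integral_mul_eq_mul_integral (hmeas i).aestronglyMeasurable
        (hcf'.measurable.comp hTm).aestronglyMeasurable
      rw [show (ζ i * fun ω => deriv f (T ω)) = fun ω => ζ i ω * deriv f (T ω) from rfl] at this
      rw [this, hmean i, zero_mul]
    have I1 : Integrable (fun ω => ζ i ω * deriv f (S ω)) μ := hprod_int i S hSm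
    have I2 : Integrable (fun ω => ζ i ω * deriv f (T ω)) μ := hprod_int i T hTm
    have I3 : Integrable (fun ω => ζ i ω * (deriv f (S ω) - deriv f (T ω))) μ := by
      have e : (fun ω => ζ i ω * (deriv f (S ω) - deriv f (T ω)))
          = fun ω => ζ i ω * deriv f (S ω) - ζ i ω * deriv f (T ω) := by
        funext ω; ring
      rw [e]; exact I1.sub I2
    have hsetle : MeasurableSet {ω | |ζ i ω| ≤ N} :=
      measurableSet_le (hmeas i).abs measurable_const
    have hsetlt : MeasurableSet {ω | N < |ζ i ω|} :=
      measurableSet_lt measurable_const (hmeas i).abs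
    -- main term via Fubini
    have main_i : ∫ ω, (if |ζ i ω| ≤ N then ζ i ω * (deriv f (S ω) - deriv f (T ω)) else 0) ∂μ
        = ∫ t in Set.Ioc (-N) N, K i t * ∫ ω, deriv (deriv f) (T ω + t) ∂μ := by
      have step1 : (fun ω => if |ζ i ω| ≤ N then ζ i ω * (deriv f (S ω) - deriv f (T ω)) else 0)
          = fun ω => ∫ t in Set.Ioc (-N) N,
              ((if 0 ≤ t ∧ t ≤ ζ i ω ∧ ζ i ω ≤ N then ζ i ω else 0)
                - (if -N ≤ ζ i ω ∧ ζ i ω ≤ t ∧ t ≤ 0 then ζ i ω else 0))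
                * deriv (deriv f) (T ω + t) := by
        funext ω
        rw [key (ζ i ω) (T ω), hT_def]
        dsimp only
        rw [sub_add_cancel]
      rw [show (∫ ω, (if |ζ i ω| ≤ N then ζ i ω * (deriv f (S ω) - deriv f (T ω)) else 0) ∂μ)
          = ∫ ω, (∫ t in Set.Ioc (-N) N,
              ((if 0 ≤ t ∧ t ≤ ζ i ω ∧ ζ i ω ≤ N then ζ i ω else 0)
                - (if -N ≤ ζ i ω ∧ ζ i ω ≤ t ∧ t ≤ 0 then ζ i ω else 0))
                * deriv (deriv f) (T ω + t)) ∂μ from by rw [step1]]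
      -- Fubini
      have hFm : Measurable (Function.uncurry fun (ω : Ω) (t : ℝ) =>
          ((if 0 ≤ t ∧ t ≤ ζ i ω ∧ ζ i ω ≤ N then ζ i ω else 0)
            - (if -N ≤ ζ i ω ∧ ζ i ω ≤ t ∧ t ≤ 0 then ζ i ω else 0))
            * deriv (deriv f) (T ω + t)) := by
        have m1 : Measurable fun p : Ω × ℝ => ζ i p.1 := (hmeas i).comp measurable_fst
        have ms1 : MeasurableSet {p : Ω × ℝ | 0 ≤ p.2 ∧ p.2 ≤ ζ i p.1 ∧ ζ i p.1 ≤ N} := by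
          have : {p : Ω × ℝ | 0 ≤ p.2 ∧ p.2 ≤ ζ i p.1 ∧ ζ i p.1 ≤ N}
              = {p : Ω × ℝ | 0 ≤ p.2} ∩ ({p : Ω × ℝ | p.2 ≤ ζ i p.1} ∩ {p : Ω × ℝ | ζ i p.1 ≤ N}) := rfl
          rw [this]
          exact (measurableSet_le measurable_const measurable_snd).inter
            ((measurableSet_le measurable_snd m1).inter (measurableSet_le m1 measurable_const))
        have ms2 : MeasurableSet {p : Ω × ℝ | -N ≤ ζ i p.1 ∧ ζ i p.1 ≤ p.2 ∧ p.2 ≤ 0} := by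
          have : {p : Ω × ℝ | -N ≤ ζ i p.1 ∧ ζ i p.1 ≤ p.2 ∧ p.2 ≤ 0}
              = {p : Ω × ℝ | -N ≤ ζ i p.1} ∩ ({p : Ω × ℝ | ζ i p.1 ≤ p.2} ∩ {p : Ω × ℝ | p.2 ≤ 0}) := rfl
          rw [this]
          exact (measurableSet_le measurable_const m1).inter
            ((measurableSet_le m1 measurable_snd).inter (measurableSet_le measurable_snd measurable_const))
        exact ((Measurable.ite ms1 m1 measurable_const).sub
            (Measurable.ite ms2 m1 measurable_const)).mul
          (hcf''.measurable.comp ((hTm.comp measurable_fst).add measurable_snd))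
      have hFint : Integrable (Function.uncurry fun (ω : Ω) (t : ℝ) =>
          ((if 0 ≤ t ∧ t ≤ ζ i ω ∧ ζ i ω ≤ N then ζ i ω else 0)
            - (if -N ≤ ζ i ω ∧ ζ i ω ≤ t ∧ t ≤ 0 then ζ i ω else 0))
            * deriv (deriv f) (T ω + t))
          (μ.prod (volume.restrict (Set.Ioc (-N) N))) := by
        refine (integrable_const (N * C₂)).mono' hFm.aestronglyMeasurable
          (ae_of_all _ fun p => ?_)
        rw [Real.norm_eq_abs, Function.uncurry, abs_mul]
        exact mul_le_mul (hφ_bd _ _) (h2 _) (abs_nonneg _) hN.le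
      rw [MeasureTheory.integral_integral_swap hFint]
      refine integral_congr_ae (Filter.Eventually.of_forall fun t => ?_)
      -- fixed t : independence factorization
      set φ : ℝ → ℝ := fun z =>
        (if 0 ≤ t ∧ t ≤ z ∧ z ≤ N then z else 0) - (if -N ≤ z ∧ z ≤ t ∧ t ≤ 0 then z else 0)
        with hφ_def
      have hφm : Measurable φ := by
        have ms1 : MeasurableSet {z : ℝ | 0 ≤ t ∧ t ≤ z ∧ z ≤ N} := by
          have : {z : ℝ | 0 ≤ t ∧ t ≤ z ∧ z ≤ N}
              = {z : ℝ | 0 ≤ t} ∩ ({z : ℝ | t ≤ z} ∩ {z : ℝ | z ≤ N}) := rfl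
          rw [this]
          exact (MeasurableSet.const _).inter
            ((measurableSet_le measurable_const measurable_id).inter
              (measurableSet_le measurable_id measurable_const))
        have ms2 : MeasurableSet {z : ℝ | -N ≤ z ∧ z ≤ t ∧ t ≤ 0} := by
          have : {z : ℝ | -N ≤ z ∧ z ≤ t ∧ t ≤ 0}
              = {z : ℝ | -N ≤ z} ∩ ({z : ℝ | z ≤ t} ∩ {z : ℝ | t ≤ 0}) := rfl
          rw [this]
          exact (measurableSet_le measurable_const measurable_id).inter
            ((measurableSet_le measurable_id measurable_const).inter (MeasurableSet.const _))
        exact (Measurable.ite ms1 measurable_id measurable_const).sub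
          (Measurable.ite ms2 measurable_id measurable_const)
      have hψm : Measurable fun y : ℝ => deriv (deriv f) (y + t) :=
        hcf''.measurable.comp (measurable_id.add_const t)
      have hXY : IndepFun (fun ω => φ (ζ i ω)) (fun ω => deriv (deriv f) (T ω + t)) μ :=
        hindep_i.comp hφm hψm
      have hmul := hXY.integral_mul_eq_mul_integral (hφm.comp (hmeas i)).aestronglyMeasurable
        (hψm.comp hTm).aestronglyMeasurable
      have hKt : K i t = ∫ ω, φ (ζ i ω) ∂μ := by
        rw [hK]
        dsimp only
        congr 1
        funext ω
        rw [hφ_def]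
        simp [Set.indicator_apply, Set.mem_setOf_eq]
      dsimp only
      rw [hKt]
      exact hmul
    -- splitting and conclusion
    have hsplit : (fun ω => ζ i ω * (deriv f (S ω) - deriv f (T ω)))
        = fun ω => (if |ζ i ω| ≤ N then ζ i ω * (deriv f (S ω) - deriv f (T ω)) else 0)
            + (if N < |ζ i ω| then ζ i ω * (deriv f (S ω) - deriv f (T ω)) else 0) := by
      funext ω
      rcases le_or_gt (|ζ i ω|) N with h | h
      · rw [if_pos h, if_neg (not_lt.mpr h), add_zero]
      · rw [if_neg (not_le.mpr h), if_pos h, zero_add]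
    have htail : ∫ ω, (if N < |ζ i ω| then ζ i ω * (deriv f (S ω) - deriv f (T ω)) else 0) ∂μ
        = ∫ ω, {ω | N < |ζ i ω|}.indicator
            (fun ω => ζ i ω * (deriv f (S ω) - deriv f (S ω - ζ i ω))) ω ∂μ := by
      refine integral_congr_ae (Filter.Eventually.of_forall fun ω => ?_)
      simp only [Set.indicator_apply, Set.mem_setOf_eq, hT_def]
    calc ∫ ω, ζ i ω * deriv f (S ω) ∂μ
        = ∫ ω, ζ i ω * (deriv f (S ω) - deriv f (T ω)) ∂μ := by
          rw [show (fun ω => ζ i ω * (deriv f (S ω) - deriv f (T ω)))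
              = fun ω => ζ i ω * deriv f (S ω) - ζ i ω * deriv f (T ω) from funext fun ω => mul_sub _ _ _,
            integral_sub I1 I2, hzero, sub_zero]
      _ = (∫ ω, (if |ζ i ω| ≤ N then ζ i ω * (deriv f (S ω) - deriv f (T ω)) else 0) ∂μ)
            + ∫ ω, (if N < |ζ i ω| then ζ i ω * (deriv f (S ω) - deriv f (T ω)) else 0) ∂μ := by
          rw [show (∫ ω, ζ i ω * (deriv f (S ω) - deriv f (T ω)) ∂μ)
              = ∫ ω, ((if |ζ i ω| ≤ N then ζ i ω * (deriv f (S ω) - deriv f (T ω)) else 0)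
                + (if N < |ζ i ω| then ζ i ω * (deriv f (S ω) - deriv f (T ω)) else 0)) ∂μ from by
              rw [← hsplit]]
          exact integral_add (hite_int _ _ I3 hsetle) (hite_int _ _ I3 hsetlt)
      _ = (∫ t in Set.Ioc (-N) N, K i t * ∫ ω, deriv (deriv f) (S ω - ζ i ω + t) ∂μ)
          + ∫ ω, {ω | N < |ζ i ω|}.indicator
              (fun ω => ζ i ω * (deriv f (S ω) - deriv f (S ω - ζ i ω))) ω ∂μ := by
          rw [main_i, htail]
  -- assemble
  have hB : ∫ ω, S ω * deriv f (S ω) ∂μ = ∑ i, ∫ ω, ζ i ω * deriv f (S ω) ∂μ := by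
    rw [← integral_finset_sum _ (fun i _ => hprod_int i S hSm)]
    congr 1
    funext ω
    simp only [hS]
    rw [Finset.sum_mul]
  rw [hB, Finset.sum_congr rfl (fun i _ => hi_eq i), Finset.sum_add_distrib]
end

section
/- Let α ∈ (1,2) and p(x) = (1/π) ∫_0^∞ e^{−λ^α} cos(λx) dλ. Then for all x ≠ 0, |p'(x)| ≤ (2α+1)/(π x²). -/
open MeasureTheory Real
open Set Filter Topology

/-- Density of the standard symmetric `α`-stable law. -/
noncomputable def stablePdf (α : ℝ) (x : ℝ) : ℝ :=
  (1 / π) * ∫ l in Set.Ioi (0:ℝ), Real.exp (-l ^ α) * Real.cos (l * x)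

section Aux
open MeasureTheory Real
open Set Filter Topology

lemma contE {α : ℝ} (hα0 : 0 < α) : Continuous fun l : ℝ => Real.exp (-l ^ α) :=
  ((continuous_id.rpow_const fun _ => Or.inr hα0.le).neg).rexp

lemma intB {α : ℝ} (hα1 : 1 < α) (s : ℝ) (hs : -1 < s) :
    IntegrableOn (fun l : ℝ => l ^ s * Real.exp (-l ^ α)) (Ioi 0) :=
  integrableOn_rpow_mul_exp_neg_rpow hs (by linarith)

lemma derivE {α l : ℝ} (hl : 0 < l) :
    HasDerivAt (fun l : ℝ => Real.exp (-l ^ α)) (-(α * l ^ (α - 1)) * Real.exp (-l ^ α)) l := by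
  have h1 : HasDerivAt (fun l : ℝ => -l ^ α) (-(α * l ^ (α - 1))) l :=
    (Real.hasDerivAt_rpow_const (Or.inl hl.ne')).neg
  simpa [mul_comm] using h1.exp

lemma rpow_split {α l : ℝ} (hl : 0 < l) : l * l ^ (α - 1) = l ^ α := by
  nth_rewrite 1 [← Real.rpow_one l]
  rw [← Real.rpow_add hl]; ring_nf

lemma derivG {α l : ℝ} (hl : 0 < l) :
    HasDerivAt (fun l : ℝ => l * Real.exp (-l ^ α))
      ((1 - α * l ^ α) * Real.exp (-l ^ α)) l := by
  have h := (hasDerivAt_id l).mul (derivE (α := α) hl)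
  refine h.congr_deriv ?_
  have : l * (α * l ^ (α - 1)) = α * l ^ α := by
    rw [← rpow_split (α := α) hl]; ring
  simp only [id_eq, one_mul]
  rw [← this]; ring

lemma derivH {α l : ℝ} (hl : 0 < l) :
    HasDerivAt (fun l : ℝ => (1 - α * l ^ α) * Real.exp (-l ^ α))
      (-(α * l ^ (α - 1)) * ((α + 1 - α * l ^ α) * Real.exp (-l ^ α))) l := by
  have h1 : HasDerivAt (fun l : ℝ => 1 - α * l ^ α) (-(α * (α * l ^ (α - 1)))) l := by
    have := ((Real.hasDerivAt_rpow_const (p := α) (Or.inl hl.ne')).const_mul α).const_sub 1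
    convert this using 1
  have h := h1.mul (derivE (α := α) hl)
  refine h.congr_deriv ?_
  ring

lemma tendstoTop {α : ℝ} (hα0 : 0 < α) (c : ℝ) :
    Tendsto (fun l : ℝ => l ^ c * Real.exp (-l ^ α)) atTop (𝓝 0) := by
  have h := (tendsto_rpow_mul_exp_neg_mul_atTop_nhds_zero (c / α) 1 one_pos).comp
    (tendsto_rpow_atTop hα0)
  apply h.congr'
  filter_upwards [eventually_gt_atTop (0:ℝ)] with l hl
  have hc : α * (c / α) = c := by field_simp
  simp only [Function.comp_apply, one_mul]
  rw [← Real.rpow_mul hl.le, hc, neg_one_mul]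

lemma intVal1 {α : ℝ} (hα1 : 1 < α) :
    ∫ l in Ioi (0:ℝ), l ^ (α - 1) * Real.exp (-l ^ α) = 1 / α := by
  rw [integral_rpow_mul_exp_neg_rpow (by linarith) (by linarith)]
  have h : (α - 1 + 1) / α = 1 := by field_simp; ring
  rw [h, Real.Gamma_one, mul_one]

lemma intVal2 {α : ℝ} (hα1 : 1 < α) :
    ∫ l in Ioi (0:ℝ), l ^ (2 * α - 1) * Real.exp (-l ^ α) = 1 / α := by
  rw [integral_rpow_mul_exp_neg_rpow (by linarith) (by linarith)]
  have h : (2 * α - 1 + 1) / α = 2 := by field_simp; ring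
  rw [h, Real.Gamma_two, mul_one]

lemma int_mono_aux {f g : ℝ → ℝ} (hg : IntegrableOn g (Ioi 0))
    (hf : Continuous f) (h : ∀ l ∈ Ioi (0:ℝ), ‖f l‖ ≤ g l) : IntegrableOn f (Ioi 0) :=
  hg.mono' (hf.aestronglyMeasurable.restrict)
    ((ae_restrict_iff' measurableSet_Ioi).2 (ae_of_all _ h))

noncomputable def Efn (α : ℝ) : ℝ → ℝ := fun l => Real.exp (-l ^ α)
noncomputable def gfn (α : ℝ) : ℝ → ℝ := fun l => l * Efn α l
noncomputable def hfn (α : ℝ) : ℝ → ℝ := fun l => (1 - α * l ^ α) * Efn α l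
noncomputable def hpfn (α : ℝ) : ℝ → ℝ :=
  fun l => -(α * l ^ (α - 1)) * ((α + 1 - α * l ^ α) * Efn α l)

lemma Efn_pos {α : ℝ} (l : ℝ) : 0 < Efn α l := Real.exp_pos _

lemma contEfn {α : ℝ} (hα0 : 0 < α) : Continuous (Efn α) := contE hα0

lemma intE {α : ℝ} (hα1 : 1 < α) : IntegrableOn (Efn α) (Ioi 0) := by
  have := intB hα1 0 (by norm_num)
  simp only [Real.rpow_zero, one_mul] at this
  exact this

lemma intg {α : ℝ} (hα1 : 1 < α) : IntegrableOn (gfn α) (Ioi 0) := by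
  have := intB hα1 1 (by norm_num)
  simp only [Real.rpow_one] at this
  exact this

lemma intEα {α : ℝ} (hα1 : 1 < α) :
    IntegrableOn (fun l => l ^ α * Efn α l) (Ioi 0) := intB hα1 α (by linarith)

lemma intEam1 {α : ℝ} (hα1 : 1 < α) :
    IntegrableOn (fun l => l ^ (α - 1) * Efn α l) (Ioi 0) := intB hα1 _ (by linarith)

lemma intE2am1 {α : ℝ} (hα1 : 1 < α) :
    IntegrableOn (fun l => l ^ (2 * α - 1) * Efn α l) (Ioi 0) := intB hα1 _ (by linarith)

lemma inth {α : ℝ} (hα1 : 1 < α) : IntegrableOn (hfn α) (Ioi 0) := by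
  have hα0 : 0 < α := by linarith
  refine int_mono_aux ((intE hα1).add ((intEα hα1).const_mul α)) ?_ ?_
  · exact (continuous_const.sub (continuous_const.mul (continuous_id.rpow_const
      fun _ => Or.inr hα0.le))).mul (contEfn hα0)
  · intro l hl
    have h1 : 0 ≤ l ^ α := Real.rpow_nonneg (le_of_lt hl) _
    have h2 : |1 - α * l ^ α| ≤ 1 + α * l ^ α := by
      refine (abs_sub _ _).trans ?_
      rw [abs_one, abs_of_nonneg (by positivity)]
    have hE := Efn_pos (α := α) l
    simp only [hfn, Real.norm_eq_abs, abs_mul, abs_of_pos hE]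
    calc |1 - α * l ^ α| * Efn α l ≤ (1 + α * l ^ α) * Efn α l := by
          exact mul_le_mul_of_nonneg_right h2 hE.le
      _ = Efn α l + α * (l ^ α * Efn α l) := by ring

noncomputable def gB (α : ℝ) : ℝ → ℝ :=
  fun l => α * (α + 1) * (l ^ (α - 1) * Efn α l) + α ^ 2 * (l ^ (2 * α - 1) * Efn α l)

lemma intgB {α : ℝ} (hα1 : 1 < α) : IntegrableOn (gB α) (Ioi 0) :=
  ((intEam1 hα1).const_mul _).add ((intE2am1 hα1).const_mul _)

lemma intgB_val {α : ℝ} (hα1 : 1 < α) : ∫ l in Ioi (0:ℝ), gB α l = 2 * α + 1 := by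
  have hα0 : 0 < α := by linarith
  unfold gB
  rw [integral_add (((intEam1 hα1).const_mul _)) (((intE2am1 hα1).const_mul _)),
    integral_const_mul, integral_const_mul]
  rw [show (fun l => l ^ (α-1) * Efn α l) = fun l : ℝ => l ^ (α-1) * Real.exp (-l ^ α) from rfl,
    show (fun l => l ^ (2*α-1) * Efn α l) = fun l : ℝ => l ^ (2*α-1) * Real.exp (-l ^ α) from rfl,
    intVal1 hα1, intVal2 hα1]
  field_simp
  ring

lemma conthp {α : ℝ} (hα1 : 1 < α) : Continuous (hpfn α) := by
  have hα0 : 0 < α := by linarith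
  exact ((continuous_const.mul (continuous_id.rpow_const fun _ => Or.inr (by linarith))).neg).mul
    ((continuous_const.sub (continuous_const.mul
      (continuous_id.rpow_const fun _ => Or.inr hα0.le))).mul (contEfn hα0))

lemma hp_abs_le {α : ℝ} (hα1 : 1 < α) {l : ℝ} (hl : 0 < l) : |hpfn α l| ≤ gB α l := by
  have hα0 : 0 < α := by linarith
  have hE := Efn_pos (α := α) l
  have hA : 0 ≤ l ^ (α - 1) := Real.rpow_nonneg hl.le _
  have hB : 0 ≤ l ^ α := Real.rpow_nonneg hl.le _
  have key : l ^ (α - 1) * l ^ α = l ^ (2 * α - 1) := by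
    rw [← Real.rpow_add hl]; ring_nf
  have h2 : |α + 1 - α * l ^ α| ≤ (α + 1) + α * l ^ α := by
    refine (abs_sub _ _).trans ?_
    rw [abs_of_pos (by linarith), abs_of_nonneg (by positivity)]
  have : |hpfn α l| = α * l ^ (α - 1) * (|α + 1 - α * l ^ α| * Efn α l) := by
    unfold hpfn
    rw [abs_mul, abs_neg, abs_mul, abs_mul, abs_of_pos hE,
      abs_of_nonneg hA, abs_of_pos hα0]
  rw [this]
  unfold gB
  calc α * l ^ (α - 1) * (|α + 1 - α * l ^ α| * Efn α l)
      ≤ α * l ^ (α - 1) * (((α + 1) + α * l ^ α) * Efn α l) := by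
        refine mul_le_mul_of_nonneg_left (mul_le_mul_of_nonneg_right h2 hE.le) (by positivity)
    _ = α * (α + 1) * (l ^ (α - 1) * Efn α l) + α ^ 2 * (l ^ (α - 1) * l ^ α * Efn α l) := by ring
    _ = _ := by rw [key]

lemma inthp {α : ℝ} (hα1 : 1 < α) : IntegrableOn (hpfn α) (Ioi 0) :=
  int_mono_aux (intgB hα1) (conthp hα1) fun l hl => by
    rw [Real.norm_eq_abs]; exact hp_abs_le hα1 hl

lemma stepA {α : ℝ} (hα1 : 1 < α) (x : ℝ) :
    HasDerivAt (fun y => ∫ l in Ioi (0:ℝ), Real.exp (-l ^ α) * Real.cos (l * y))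
      (∫ l in Ioi (0:ℝ), -(gfn α l * Real.sin (l * x))) x := by
  have hα0 : 0 < α := by linarith
  have cE := contEfn (α := α) hα0
  have key := hasDerivAt_integral_of_dominated_loc_of_deriv_le
    (F := fun y l => Efn α l * Real.cos (l * y))
    (F' := fun y l => -(gfn α l * Real.sin (l * y)))
    (bound := gfn α) (μ := volume.restrict (Ioi 0)) (x₀ := x) (Metric.ball_mem_nhds x one_pos)
    ?_ ?_ ?_ ?_ ?_ ?_
  · exact key.2
  · refine Eventually.of_forall fun y => ?_
    exact (cE.mul (Real.continuous_cos.comp (continuous_id.mul continuous_const))).aestronglyMeasurable.restrict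
  · refine int_mono_aux (intE hα1) ?_ fun l hl => ?_
    · exact cE.mul (Real.continuous_cos.comp (continuous_id.mul continuous_const))
    · rw [Real.norm_eq_abs, abs_mul, abs_of_pos (Efn_pos l)]
      exact mul_le_of_le_one_right (Efn_pos l).le (Real.abs_cos_le_one _)
  · exact (((continuous_id.mul cE).mul (Real.continuous_sin.comp
      (continuous_id.mul continuous_const))).neg).aestronglyMeasurable.restrict
  · rw [ae_restrict_iff' measurableSet_Ioi]
    refine ae_of_all _ fun l hl y _ => ?_
    have hl' : (0:ℝ) < l := hl
    have hg : 0 ≤ gfn α l := by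
      exact mul_nonneg hl'.le (Efn_pos l).le
    rw [norm_neg, Real.norm_eq_abs, abs_mul, abs_of_nonneg hg]
    exact mul_le_of_le_one_right hg (Real.abs_sin_le_one _)
  · exact intg hα1
  · refine ae_of_all _ fun l y _ => ?_
    have hc : HasDerivAt (fun y : ℝ => l * y) l y := by
      simpa using (hasDerivAt_id y).const_mul l
    have := ((Real.hasDerivAt_cos (l * y)).comp y hc).const_mul (Efn α l)
    refine this.congr_deriv ?_
    unfold gfn; ring

lemma tendsto_g_top {α : ℝ} (hα0 : 0 < α) : Tendsto (gfn α) atTop (𝓝 0) := by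
  have := tendstoTop hα0 1
  simp only [Real.rpow_one] at this
  exact this

lemma tendsto_h_top {α : ℝ} (hα0 : 0 < α) : Tendsto (hfn α) atTop (𝓝 0) := by
  have t0 : Tendsto (Efn α) atTop (𝓝 0) := by
    have := tendstoTop hα0 0
    simp only [Real.rpow_zero, one_mul] at this
    exact this
  have tα := (tendstoTop hα0 α).const_mul α
  have h := t0.sub tα
  rw [mul_zero, sub_zero] at h
  exact h.congr fun l => by unfold hfn Efn; ring

lemma h_abs_le {α : ℝ} (hα1 : 1 < α) {l : ℝ} (hl : 0 < l) :
    |hfn α l| ≤ Efn α l + α * (l ^ α * Efn α l) := by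
  have hα0 : 0 < α := by linarith
  have h1 : 0 ≤ l ^ α := Real.rpow_nonneg hl.le _
  have hE := Efn_pos (α := α) l
  have h2 : |1 - α * l ^ α| ≤ 1 + α * l ^ α := by
    refine (abs_sub _ _).trans ?_
    rw [abs_one, abs_of_nonneg (by positivity)]
  calc |hfn α l| = |1 - α * l ^ α| * Efn α l := by
        rw [hfn, abs_mul, abs_of_pos hE]
    _ ≤ (1 + α * l ^ α) * Efn α l := mul_le_mul_of_nonneg_right h2 hE.le
    _ = Efn α l + α * (l ^ α * Efn α l) := by ring

lemma ibp1 {α x : ℝ} (hα1 : 1 < α) (hx : x ≠ 0) :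
    ∫ l in Ioi (0:ℝ), gfn α l * Real.sin (l * x)
      = (1 / x) * ∫ l in Ioi (0:ℝ), hfn α l * Real.cos (l * x) := by
  have hα0 : 0 < α := by linarith
  have hxa : 0 < |x| := abs_pos.2 hx
  have cE := contEfn (α := α) hα0
  have hu : ∀ l ∈ Ioi (0:ℝ), HasDerivAt (gfn α) (hfn α l) l := fun l hl => derivG hl
  have hv : ∀ l ∈ Ioi (0:ℝ),
      HasDerivAt (fun l => -Real.cos (l * x) / x) (Real.sin (l * x)) l := by
    intro l _
    have := ((Real.hasDerivAt_cos (l * x)).comp l (hasDerivAt_mul_const x)).neg.div_const x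
    refine this.congr_deriv ?_
    field_simp
  have huv' : IntegrableOn (gfn α * fun l => Real.sin (l * x)) (Ioi 0) := by
    refine int_mono_aux (intg hα1) ((continuous_id.mul cE).mul
      (Real.continuous_sin.comp (continuous_id.mul continuous_const))) fun l hl => ?_
    have hg : 0 ≤ gfn α l := mul_nonneg (le_of_lt hl) (Efn_pos l).le
    rw [Pi.mul_apply, Real.norm_eq_abs, abs_mul, abs_of_nonneg hg]
    exact mul_le_of_le_one_right hg (Real.abs_sin_le_one _)
  have hu'v : IntegrableOn (hfn α * fun l => -Real.cos (l * x) / x) (Ioi 0) := by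
    refine int_mono_aux (((intE hα1).add ((intEα hα1).const_mul α)).const_mul (1 / |x|))
      ((continuous_const.sub (continuous_const.mul (continuous_id.rpow_const
        fun _ => Or.inr hα0.le))).mul cE |>.mul
        ((Real.continuous_cos.comp (continuous_id.mul continuous_const)).neg.div_const x))
      fun l hl => ?_
    rw [Pi.mul_apply, Real.norm_eq_abs, abs_mul, abs_div, abs_neg]
    calc |hfn α l| * (|Real.cos (l * x)| / |x|) ≤ |hfn α l| * (1 / |x|) := by
          gcongr
          exact Real.abs_cos_le_one _
      _ ≤ (Efn α l + α * (l ^ α * Efn α l)) * (1 / |x|) := by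
          gcongr
          exact h_abs_le hα1 hl
      _ = 1 / |x| * (Efn α l + α * (l ^ α * Efn α l)) := by ring
  have h_zero : Tendsto (gfn α * fun l => -Real.cos (l * x) / x) (nhdsWithin 0 (Ioi 0)) (𝓝 0) := by
    have c : Continuous (gfn α * fun l => -Real.cos (l * x) / x) :=
      (continuous_id.mul cE).mul ((Real.continuous_cos.comp (continuous_id.mul continuous_const)).neg.div_const x)
    have h2 := (c.tendsto 0).mono_left (nhdsWithin_le_nhds (s := Ioi 0))
    simpa [gfn] using h2
  have h_infty : Tendsto (gfn α * fun l => -Real.cos (l * x) / x) atTop (𝓝 0) := by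
    refine (tendsto_g_top hα0).zero_mul_isBoundedUnder_le ?_
    refine isBoundedUnder_of ⟨1 / |x|, fun l => ?_⟩
    simp only [Function.comp_apply, Real.norm_eq_abs, abs_div, abs_neg]
    gcongr
    exact Real.abs_cos_le_one _
  have key := integral_Ioi_mul_deriv_eq_deriv_mul hu hv huv' hu'v h_zero h_infty
  rw [key]
  simp only [show ∀ l : ℝ, hfn α l * (-Real.cos (l * x) / x)
      = -(1 / x) * (hfn α l * Real.cos (l * x)) from fun l => by ring]
  rw [integral_const_mul]
  ring

lemma ibp2 {α x : ℝ} (hα1 : 1 < α) (hx : x ≠ 0) :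
    ∫ l in Ioi (0:ℝ), hfn α l * Real.cos (l * x)
      = -((1 / x) * ∫ l in Ioi (0:ℝ), hpfn α l * Real.sin (l * x)) := by
  have hα0 : 0 < α := by linarith
  have hxa : 0 < |x| := abs_pos.2 hx
  have cE := contEfn (α := α) hα0
  have ch : Continuous (hfn α) := (continuous_const.sub (continuous_const.mul
    (continuous_id.rpow_const fun _ => Or.inr hα0.le))).mul cE
  have hu : ∀ l ∈ Ioi (0:ℝ), HasDerivAt (hfn α) (hpfn α l) l := fun l hl => derivH hl
  have hv : ∀ l ∈ Ioi (0:ℝ),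
      HasDerivAt (fun l => Real.sin (l * x) / x) (Real.cos (l * x)) l := by
    intro l _
    have := ((Real.hasDerivAt_sin (l * x)).comp l (hasDerivAt_mul_const x)).div_const x
    refine this.congr_deriv ?_
    field_simp
  have huv' : IntegrableOn (hfn α * fun l => Real.cos (l * x)) (Ioi 0) := by
    refine int_mono_aux ((intE hα1).add ((intEα hα1).const_mul α))
      (ch.mul (Real.continuous_cos.comp (continuous_id.mul continuous_const)))
      fun l hl => ?_
    rw [Pi.mul_apply, Real.norm_eq_abs, abs_mul]
    calc |hfn α l| * |Real.cos (l * x)| ≤ |hfn α l| * 1 := by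
          gcongr; exact Real.abs_cos_le_one _
      _ ≤ Efn α l + α * (l ^ α * Efn α l) := by
          rw [mul_one]; exact h_abs_le hα1 hl
  have hu'v : IntegrableOn (hpfn α * fun l => Real.sin (l * x) / x) (Ioi 0) := by
    refine int_mono_aux ((intgB hα1).const_mul (1 / |x|))
      ((conthp hα1).mul ((Real.continuous_sin.comp
        (continuous_id.mul continuous_const)).div_const x)) fun l hl => ?_
    rw [Pi.mul_apply, Real.norm_eq_abs, abs_mul, abs_div]
    calc |hpfn α l| * (|Real.sin (l * x)| / |x|) ≤ |hpfn α l| * (1 / |x|) := by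
          gcongr; exact Real.abs_sin_le_one _
      _ ≤ gB α l * (1 / |x|) := by gcongr; exact hp_abs_le hα1 hl
      _ = 1 / |x| * gB α l := by ring
  have h_zero : Tendsto (hfn α * fun l => Real.sin (l * x) / x)
      (nhdsWithin 0 (Ioi 0)) (𝓝 0) := by
    have c : Continuous (hfn α * fun l => Real.sin (l * x) / x) :=
      ch.mul ((Real.continuous_sin.comp (continuous_id.mul continuous_const)).div_const x)
    have h2 := (c.tendsto 0).mono_left (nhdsWithin_le_nhds (s := Ioi 0))
    simpa using h2
  have h_infty : Tendsto (hfn α * fun l => Real.sin (l * x) / x) atTop (𝓝 0) := by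
    refine (tendsto_h_top hα0).zero_mul_isBoundedUnder_le ?_
    refine isBoundedUnder_of ⟨1 / |x|, fun l => ?_⟩
    simp only [Function.comp_apply, Real.norm_eq_abs, abs_div]
    gcongr
    exact Real.abs_sin_le_one _
  have key := integral_Ioi_mul_deriv_eq_deriv_mul hu hv huv' hu'v h_zero h_infty
  rw [key]
  simp only [show ∀ l : ℝ, hpfn α l * (Real.sin (l * x) / x)
      = 1 / x * (hpfn α l * Real.sin (l * x)) from fun l => by ring]
  rw [integral_const_mul]
  ring

lemma boundC {α x : ℝ} (hα1 : 1 < α) :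
    |∫ l in Ioi (0:ℝ), hpfn α l * Real.sin (l * x)| ≤ 2 * α + 1 := by
  have hb : ∀ l ∈ Ioi (0:ℝ), ‖hpfn α l * Real.sin (l * x)‖ ≤ gB α l := by
    intro l hl
    rw [Real.norm_eq_abs, abs_mul]
    calc |hpfn α l| * |Real.sin (l * x)| ≤ |hpfn α l| * 1 := by
          gcongr; exact Real.abs_sin_le_one _
      _ ≤ gB α l := by rw [mul_one]; exact hp_abs_le hα1 hl
  have h := norm_integral_le_of_norm_le (f := fun l => hpfn α l * Real.sin (l * x))
    (intgB hα1) ((ae_restrict_iff' measurableSet_Ioi).2 (ae_of_all _ hb))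
  rw [intgB_val hα1] at h
  exact (Real.norm_eq_abs _) ▸ h

end Aux

theorem stmt_8 (α : ℝ) (hα : α ∈ Set.Ioo (1:ℝ) 2) (x : ℝ) (hx : x ≠ 0) :
    |deriv (stablePdf α) x| ≤ (2 * α + 1) / (π * x ^ 2) := by
  obtain ⟨hα1, -⟩ := hα
  have hπ := Real.pi_pos
  have hx2 : (0:ℝ) < x ^ 2 := by positivity
  have hD : HasDerivAt (stablePdf α)
      ((1 / π) * ∫ l in Ioi (0:ℝ), -(gfn α l * Real.sin (l * x))) x := by
    have := (stepA hα1 x).const_mul (1 / π)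
    exact this
  rw [hD.deriv, integral_neg, ibp1 hα1 hx, ibp2 hα1 hx]
  have heq : (1 / π) * - ((1 / x) * -((1 / x) * ∫ l in Ioi (0:ℝ), hpfn α l * Real.sin (l * x)))
      = (∫ l in Ioi (0:ℝ), hpfn α l * Real.sin (l * x)) / (π * x ^ 2) := by
    field_simp
  rw [heq, abs_div, abs_of_pos (by positivity : (0:ℝ) < π * x ^ 2)]
  exact (div_le_div_iff_of_pos_right (by positivity)).2 (boundC hα1)
end

section
/- Let α ∈ (1,2) and p(x) = (1/π) ∫_0^∞ e^{−λ^α} cos(λx) dλ. Then |p''(x)| ≤ 2/(απ) for all x, and |p''(x)| ≤ (2α+6)/(π x²) for all x ≠ 0. -/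
open MeasureTheory Real Set Filter Topology

namespace StableAux

variable {α : ℝ}

lemma gammaLeMax {u v t : ℝ} (hu : 0 < u) (huv : u ≤ v) (ht : t ∈ Icc u v) :
    Real.Gamma t ≤ max (Real.Gamma u) (Real.Gamma v) :=
  Real.convexOn_Gamma.le_on_segment (mem_Ioi.mpr hu)
    (mem_Ioi.mpr (lt_of_lt_of_le hu huv)) ((segment_eq_Icc huv) ▸ ht)

lemma gamma_two : Real.Gamma 2 = 1 := by
  rw [show (2:ℝ) = 1 + 1 by norm_num, Real.Gamma_add_one one_ne_zero, Real.Gamma_one]; ring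

lemma gamma_three : Real.Gamma 3 = 2 := by
  rw [show (3:ℝ) = 2 + 1 by norm_num, Real.Gamma_add_one two_ne_zero, gamma_two]; ring

lemma gamma_le_one {t : ℝ} (h1 : 1 ≤ t) (h2 : t ≤ 2) : Real.Gamma t ≤ 1 := by
  have := gammaLeMax (u := 1) (v := 2) one_pos (by norm_num) ⟨h1, h2⟩
  rwa [Real.Gamma_one, gamma_two, max_self] at this

lemma gamma_le_two {t : ℝ} (h1 : 3/2 ≤ t) (h2 : t ≤ 3) : Real.Gamma t ≤ 2 := by
  have := gammaLeMax (u := 3/2) (v := 3) (by norm_num) (by norm_num) ⟨h1, h2⟩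
  have h32 : Real.Gamma (3/2) ≤ 2 := by
    rw [show (3/2 : ℝ) = 1/2 + 1 by norm_num, Real.Gamma_add_one (by norm_num),
      Real.Gamma_one_half_eq]
    nlinarith [Real.sq_sqrt Real.pi_pos.le, Real.sqrt_nonneg π, Real.pi_le_four]
  rw [gamma_three] at this
  exact this.trans (max_le h32 le_rfl)

variable {α : ℝ}

lemma contRpow (hα : 0 < α) : Continuous fun l : ℝ => l ^ α :=
  Real.continuous_rpow_const hα.le

lemma contExp (hα : 0 < α) : Continuous fun l : ℝ => Real.exp (-l ^ α) :=
  Real.continuous_exp.comp (contRpow hα).neg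

lemma integRpow (hα : 1 < α) {q : ℝ} (hq : -1 < q) :
    IntegrableOn (fun l : ℝ => l ^ q * Real.exp (-l ^ α)) (Ioi 0) :=
  integrableOn_rpow_mul_exp_neg_rpow hq (by linarith)

lemma integExp (hα : 1 < α) : IntegrableOn (fun l : ℝ => Real.exp (-l ^ α)) (Ioi 0) := by
  simpa using integRpow hα (q := 0) (by norm_num)

lemma integCongr {f g : ℝ → ℝ} (hf : IntegrableOn f (Ioi 0))
    (h : ∀ l : ℝ, 0 < l → f l = g l) : IntegrableOn g (Ioi 0) :=
  hf.congr_fun (fun l hl => h l hl) measurableSet_Ioi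

lemma tend0 (hα : 1 < α) (q : ℝ) :
    Tendsto (fun t : ℝ => t ^ q * Real.exp (-t ^ α)) atTop (𝓝 0) := by
  have h := rpow_mul_exp_neg_mul_rpow_isLittleO_exp_neg q hα one_pos
  have h2 : Tendsto (fun t : ℝ => Real.exp (-(1/2) * t)) atTop (𝓝 0) := by
    apply Real.tendsto_exp_atBot.comp
    exact tendsto_id.const_mul_atTop_of_neg (by norm_num)
  have := h.trans_tendsto h2
  simpa [neg_mul, one_mul] using this


lemma hasDeriv1 (hα : α ∈ Ioo (1:ℝ) 2) (x : ℝ) :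
    HasDerivAt (fun y => ∫ l in Ioi (0:ℝ), Real.exp (-l ^ α) * Real.cos (l * y))
      (∫ l in Ioi (0:ℝ), -(l * Real.exp (-l ^ α) * Real.sin (l * x))) x := by
  have hα0 : (0:ℝ) < α := by linarith [hα.1]
  have hmeas : ∀ y : ℝ, AEStronglyMeasurable
      (fun l : ℝ => Real.exp (-l ^ α) * Real.cos (l * y)) (volume.restrict (Ioi 0)) := by
    intro y
    exact ((contExp hα0).mul (Real.continuous_cos.comp
      (continuous_id.mul continuous_const))).aestronglyMeasurable
  have hbound : IntegrableOn (fun l : ℝ => |l| * Real.exp (-l ^ α)) (Ioi 0) := by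
    refine integCongr (integRpow hα.1 (q := 1) (by norm_num)) fun l hl => ?_
    rw [Real.rpow_one, abs_of_pos hl]
  refine (hasDerivAt_integral_of_dominated_loc_of_deriv_le (s := Metric.ball x 1) (x₀ := x)
    (F' := fun y l => -(l * Real.exp (-l ^ α) * Real.sin (l * y))) (Metric.ball_mem_nhds x one_pos)
    (Eventually.of_forall fun y => hmeas y) ?_ ?_ ?_ hbound ?_).2
  · refine Integrable.mono' (integExp hα.1) (hmeas x) ?_
    filter_upwards with l
    rw [norm_mul, Real.norm_eq_abs, Real.norm_eq_abs, Real.abs_exp]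
    exact mul_le_of_le_one_right (Real.exp_pos _).le (abs_cos_le_one _)
  · exact (((continuous_id.mul (contExp hα0)).mul (Real.continuous_sin.comp
      (continuous_id.mul continuous_const))).neg).aestronglyMeasurable
  · filter_upwards with l
    intro y _
    rw [norm_neg, norm_mul, norm_mul, Real.norm_eq_abs, Real.norm_eq_abs, Real.norm_eq_abs,
      Real.abs_exp]
    exact mul_le_of_le_one_right (by positivity) (abs_sin_le_one _)
  · filter_upwards with l
    intro y _
    have h1 : HasDerivAt (fun y : ℝ => l * y) l y := by
      simpa using (hasDerivAt_id y).const_mul l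
    have h2 := (Real.hasDerivAt_cos (l * y)).comp y h1
    have h3 := h2.const_mul (Real.exp (-l ^ α))
    refine h3.congr_deriv (Eq.symm ?_)
    ring

lemma hasDeriv2 (hα : α ∈ Ioo (1:ℝ) 2) (x : ℝ) :
    HasDerivAt (fun y => ∫ l in Ioi (0:ℝ), -(l * Real.exp (-l ^ α) * Real.sin (l * y)))
      (∫ l in Ioi (0:ℝ), -(l ^ 2 * Real.exp (-l ^ α) * Real.cos (l * x))) x := by
  have hα0 : (0:ℝ) < α := by linarith [hα.1]
  have hmeas : ∀ y : ℝ, AEStronglyMeasurable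
      (fun l : ℝ => -(l * Real.exp (-l ^ α) * Real.sin (l * y))) (volume.restrict (Ioi 0)) := by
    intro y
    exact (((continuous_id.mul (contExp hα0)).mul (Real.continuous_sin.comp
      (continuous_id.mul continuous_const))).neg).aestronglyMeasurable
  have hbound : IntegrableOn (fun l : ℝ => l ^ 2 * Real.exp (-l ^ α)) (Ioi 0) := by
    refine integCongr (integRpow hα.1 (q := 2) (by norm_num)) fun l hl => ?_
    rw [show ((2:ℝ) = ((2:ℕ):ℝ)) by norm_num, Real.rpow_natCast]
  have hint1 : IntegrableOn (fun l : ℝ => |l| * Real.exp (-l ^ α)) (Ioi 0) := by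
    refine integCongr (integRpow hα.1 (q := 1) (by norm_num)) fun l hl => ?_
    rw [Real.rpow_one, abs_of_pos hl]
  refine (hasDerivAt_integral_of_dominated_loc_of_deriv_le (s := Metric.ball x 1) (x₀ := x)
    (F' := fun y l => -(l ^ 2 * Real.exp (-l ^ α) * Real.cos (l * y))) (Metric.ball_mem_nhds x one_pos)
    (Eventually.of_forall fun y => hmeas y) ?_ ?_ ?_ hbound ?_).2
  · refine Integrable.mono' hint1 (hmeas x) ?_
    filter_upwards with l
    rw [norm_neg, norm_mul, norm_mul, Real.norm_eq_abs, Real.norm_eq_abs, Real.norm_eq_abs,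
      Real.abs_exp]
    exact mul_le_of_le_one_right (by positivity) (abs_sin_le_one _)
  · exact ((((continuous_pow 2).mul (contExp hα0)).mul (Real.continuous_cos.comp
      (continuous_id.mul continuous_const))).neg).aestronglyMeasurable
  · filter_upwards with l
    intro y _
    rw [norm_neg, norm_mul, norm_mul, Real.norm_eq_abs, Real.norm_eq_abs, Real.norm_eq_abs,
      Real.abs_exp, abs_pow, sq_abs]
    exact mul_le_of_le_one_right (by positivity) (abs_cos_le_one _)
  · filter_upwards with l
    intro y _
    have h1 : HasDerivAt (fun y : ℝ => l * y) l y := by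
      simpa using (hasDerivAt_id y).const_mul l
    have h2 := (Real.hasDerivAt_sin (l * y)).comp y h1
    have h3 := (h2.const_mul (l * Real.exp (-l ^ α))).neg
    refine h3.congr_deriv (Eq.symm ?_)
    ring


lemma ibp (hα : α ∈ Ioo (1:ℝ) 2) {x : ℝ} (hx : x ≠ 0) :
    ∫ l in Ioi (0:ℝ), -(l ^ 2 * Real.exp (-l ^ α) * Real.cos (l * x))
      = (x ^ 2)⁻¹ * ∫ l in Ioi (0:ℝ),
          (2 - α * (α + 3) * l ^ α + α ^ 2 * (l ^ α * l ^ α)) * Real.exp (-l ^ α)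
            * Real.cos (l * x) := by
  have hα1 := hα.1
  have hα0 : (0:ℝ) < α := by linarith
  set e : ℝ → ℝ := fun l => Real.exp (-l ^ α) with he
  set H : ℝ → ℝ := fun l => x⁻¹ * ((l ^ 2 * e l) * Real.sin (l * x))
      + (x ^ 2)⁻¹ * (((2 * l - α * l ^ (α + 1)) * e l) * Real.cos (l * x)) with hH
  set f1 : ℝ → ℝ := fun l => l ^ 2 * e l * Real.cos (l * x) with hf1
  set f2 : ℝ → ℝ := fun l => (x ^ 2)⁻¹ *
      ((2 - α * (α + 3) * l ^ α + α ^ 2 * (l ^ α * l ^ α)) * e l * Real.cos (l * x)) with hf2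
  -- continuity facts
  have csin : Continuous fun l : ℝ => Real.sin (l * x) :=
    Real.continuous_sin.comp (continuous_id.mul continuous_const)
  have ccos : Continuous fun l : ℝ => Real.cos (l * x) :=
    Real.continuous_cos.comp (continuous_id.mul continuous_const)
  have cr1 : Continuous fun l : ℝ => l ^ (α + 1) :=
    Real.continuous_rpow_const (by linarith)
  have cH : Continuous H := by
    apply Continuous.add
    · exact continuous_const.mul (((continuous_pow 2).mul (contExp hα0)).mul csin)
    · exact continuous_const.mul ((((continuous_const.mul continuous_id).sub
        (continuous_const.mul cr1)).mul (contExp hα0)).mul ccos)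
  -- derivative of H on Ioi 0
  have hderiv : ∀ l ∈ Ioi (0:ℝ), HasDerivAt H (f1 l + f2 l) l := by
    intro l hl
    rw [mem_Ioi] at hl
    have hde : HasDerivAt e (-(α * l ^ (α - 1)) * e l) l := by
      have hr := (Real.hasDerivAt_rpow_const (x := l) (p := α) (Or.inl hl.ne')).neg
      have h2 := (Real.hasDerivAt_exp (-(l ^ α))).comp l hr
      refine h2.congr_deriv (Eq.symm ?_)
      simp [he]; ring
    have hdsin : HasDerivAt (fun l : ℝ => Real.sin (l * x)) (Real.cos (l * x) * x) l :=
      (Real.hasDerivAt_sin (l * x)).comp (h₂ := Real.sin) l (hasDerivAt_mul_const x)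
    have hdcos : HasDerivAt (fun l : ℝ => Real.cos (l * x)) (-Real.sin (l * x) * x) l :=
      (Real.hasDerivAt_cos (l * x)).comp (h₂ := Real.cos) l (hasDerivAt_mul_const x)
    have k1 : l * l ^ (α - 1) = l ^ α := by
      rw [show l * l ^ (α-1) = l ^ (1:ℝ) * l ^ (α-1) by rw [Real.rpow_one],
        ← Real.rpow_add hl]
      norm_num
    have k2 : l ^ (2:ℕ) * l ^ (α - 1) = l ^ (α + 1) := by
      rw [← Real.rpow_natCast l 2, ← Real.rpow_add hl]
      congr 1
      push_cast
      ring
    have k3 : l ^ (α + 1) * l ^ (α - 1) = l ^ α * l ^ α := by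
      rw [← Real.rpow_add hl, ← Real.rpow_add hl]
      ring_nf
    have hdg : HasDerivAt (fun l : ℝ => l ^ 2 * e l) ((2 * l - α * l ^ (α + 1)) * e l) l := by
      have := (hasDerivAt_pow 2 l).mul hde
      refine this.congr_deriv (Eq.symm ?_)
      push_cast
      linear_combination α * e l * k2
    have hdg1 : HasDerivAt (fun l : ℝ => (2 * l - α * l ^ (α + 1)) * e l)
        ((2 - α * (α + 3) * l ^ α + α ^ 2 * (l ^ α * l ^ α)) * e l) l := by
      have ha : HasDerivAt (fun l : ℝ => 2 * l - α * l ^ (α + 1))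
          (2 - α * ((α + 1) * l ^ (α + 1 - 1))) l := by
        have hb := (Real.hasDerivAt_rpow_const (x := l) (p := α + 1)
          (Or.inl hl.ne')).const_mul α
        have hc : HasDerivAt (fun l : ℝ => 2 * l) 2 l := by
          simpa using (hasDerivAt_id l).const_mul 2
        exact hc.sub hb
      have := ha.mul hde
      refine this.congr_deriv (Eq.symm ?_)
      have k4 : l ^ (α + 1 - 1) = l ^ α := by rw [show α + 1 - 1 = α by ring]
      linear_combination (α * (α + 1) * e l) * k4 + (2 * α * e l) * k1 - (α ^ 2 * e l) * k3
    have hA := (hdg.mul hdsin).const_mul x⁻¹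
    have hB := (hdg1.mul hdcos).const_mul (x ^ 2)⁻¹
    have := hA.add hB
    refine this.congr_deriv (Eq.symm ?_)
    rw [hf1, hf2]
    field_simp
    ring
  -- integrability
  have hint1 : IntegrableOn f1 (Ioi 0) := by
    have hb : IntegrableOn (fun l : ℝ => l ^ 2 * e l) (Ioi 0) := by
      refine integCongr (integRpow hα1 (q := 2) (by norm_num)) fun l hl => ?_
      rw [show ((2:ℝ) = ((2:ℕ):ℝ)) by norm_num, Real.rpow_natCast]
    refine hb.mono' (((continuous_pow 2).mul (contExp hα0)).mul ccos).aestronglyMeasurable ?_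
    filter_upwards with l
    rw [hf1, Real.norm_eq_abs, abs_mul, abs_mul, abs_pow, sq_abs, Real.abs_exp]
    exact mul_le_of_le_one_right (by positivity) (abs_cos_le_one _)
  have hMint : IntegrableOn
      (fun l : ℝ => (2 + α * (α + 3) * l ^ α + α ^ 2 * (l ^ α * l ^ α)) * e l) (Ioi 0) := by
    have h0 : IntegrableOn (fun l : ℝ => 2 * e l) (Ioi 0) := (integExp hα1).const_mul 2
    have h1 : IntegrableOn (fun l : ℝ => α * (α + 3) * (l ^ α * e l)) (Ioi 0) :=
      (integRpow hα1 (q := α) (by linarith)).const_mul _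
    have h2 : IntegrableOn (fun l : ℝ => α ^ 2 * (l ^ α * l ^ α * e l)) (Ioi 0) := by
      refine Integrable.const_mul ?_ _
      refine integCongr (integRpow hα1 (q := α + α) (by linarith)) fun l hl => ?_
      rw [Real.rpow_add hl]
    have hsum : IntegrableOn (fun l : ℝ =>
        2 * e l + α * (α + 3) * (l ^ α * e l) + α ^ 2 * (l ^ α * l ^ α * e l)) (Ioi 0) :=
      (h0.add h1).add h2
    exact integCongr hsum fun l hl => by ring
  have hcontg2 : Continuous fun l : ℝ =>
      (2 - α * (α + 3) * l ^ α + α ^ 2 * (l ^ α * l ^ α)) * e l * Real.cos (l * x) := by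
    refine Continuous.mul (Continuous.mul ?_ (contExp hα0)) ccos
    exact (continuous_const.sub (continuous_const.mul (contRpow hα0))).add
      (continuous_const.mul ((contRpow hα0).mul (contRpow hα0)))
  have habs : ∀ l : ℝ, 0 < l →
      |(2 - α * (α + 3) * l ^ α + α ^ 2 * (l ^ α * l ^ α)) * e l * Real.cos (l * x)|
        ≤ (2 + α * (α + 3) * l ^ α + α ^ 2 * (l ^ α * l ^ α)) * e l := by
    intro l hl
    have hr : (0:ℝ) ≤ l ^ α := Real.rpow_nonneg hl.le α
    rw [abs_mul, abs_mul, Real.abs_exp]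
    have h1 : |2 - α * (α + 3) * l ^ α + α ^ 2 * (l ^ α * l ^ α)|
        ≤ 2 + α * (α + 3) * l ^ α + α ^ 2 * (l ^ α * l ^ α) := by
      rw [abs_le]
      constructor <;> nlinarith
    calc |2 - α * (α + 3) * l ^ α + α ^ 2 * (l ^ α * l ^ α)| * e l * |Real.cos (l * x)|
        ≤ |2 - α * (α + 3) * l ^ α + α ^ 2 * (l ^ α * l ^ α)| * e l * 1 := by
          refine mul_le_mul_of_nonneg_left (abs_cos_le_one _) (by positivity)
      _ ≤ (2 + α * (α + 3) * l ^ α + α ^ 2 * (l ^ α * l ^ α)) * e l := by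
          rw [mul_one]
          exact mul_le_mul_of_nonneg_right h1 (Real.exp_pos _).le
  have hint2 : IntegrableOn f2 (Ioi 0) := by
    refine Integrable.const_mul ?_ _
    refine (hMint).mono' hcontg2.aestronglyMeasurable ?_
    filter_upwards [ae_restrict_mem measurableSet_Ioi] with l hl
    rw [Real.norm_eq_abs]
    exact habs l hl
  -- limit at infinity
  have htop : Tendsto H atTop (𝓝 0) := by
    rw [show (0:ℝ) = 0 + 0 by norm_num]
    apply Tendsto.add
    · apply squeeze_zero_norm' (a := fun l => |x⁻¹| * (l ^ (2:ℝ) * e l))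
      · filter_upwards [eventually_gt_atTop (0:ℝ)] with l hl
        rw [Real.norm_eq_abs, abs_mul, abs_mul, abs_mul, abs_pow, sq_abs, Real.abs_exp,
          show l ^ (2:ℝ) = l ^ (2:ℕ) by rw [← Real.rpow_natCast]; norm_num]
        refine mul_le_mul_of_nonneg_left ?_ (abs_nonneg _)
        exact mul_le_of_le_one_right (by positivity) (abs_sin_le_one _)
      · simpa using (tend0 hα1 2).const_mul |x⁻¹|
    · apply squeeze_zero_norm'
        (a := fun l => |(x ^ 2)⁻¹| * (2 * (l ^ (1:ℝ) * e l) + α * (l ^ (α + 1) * e l)))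
      · filter_upwards [eventually_gt_atTop (0:ℝ)] with l hl
        rw [Real.norm_eq_abs, abs_mul, abs_mul, abs_mul, Real.abs_exp]
        refine mul_le_mul_of_nonneg_left ?_ (abs_nonneg _)
        have h2 : |2 * l - α * l ^ (α + 1)| ≤ 2 * (l ^ (1:ℝ)) + α * l ^ (α + 1) := by
          have hr : (0:ℝ) ≤ l ^ (α + 1) := Real.rpow_nonneg hl.le _
          rw [Real.rpow_one, abs_le]
          constructor <;> nlinarith
        calc |2 * l - α * l ^ (α + 1)| * e l * |Real.cos (l * x)|
            ≤ |2 * l - α * l ^ (α + 1)| * e l * 1 :=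
              mul_le_mul_of_nonneg_left (abs_cos_le_one _) (by positivity)
          _ ≤ (2 * (l ^ (1:ℝ)) + α * l ^ (α + 1)) * e l := by
              rw [mul_one]
              exact mul_le_mul_of_nonneg_right h2 (Real.exp_pos _).le
          _ = 2 * (l ^ (1:ℝ) * e l) + α * (l ^ (α + 1) * e l) := by ring
      · have := (((tend0 hα1 1).const_mul 2).add
          ((tend0 hα1 (α + 1)).const_mul α)).const_mul |(x ^ 2)⁻¹|
        simpa using this
  -- value at 0
  have hH0 : H 0 = 0 := by
    have : (0:ℝ) ^ (α + 1) = 0 := Real.zero_rpow (by positivity)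
    simp [hH, this]
  -- FTC
  have key := integral_Ioi_of_hasDerivAt_of_tendsto cH.continuousWithinAt hderiv
    (hint1.add hint2) htop
  rw [hH0, sub_zero] at key
  have hsplit : ∫ l in Ioi (0:ℝ), (f1 l + f2 l) =
      (∫ l in Ioi (0:ℝ), f1 l) + ∫ l in Ioi (0:ℝ), f2 l := integral_add hint1 hint2
  rw [hsplit] at key
  have h2 : ∫ l in Ioi (0:ℝ), f2 l = (x ^ 2)⁻¹ * ∫ l in Ioi (0:ℝ),
      (2 - α * (α + 3) * l ^ α + α ^ 2 * (l ^ α * l ^ α)) * e l * Real.cos (l * x) := by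
    rw [hf2]
    exact integral_const_mul _ _
  have h3 : ∫ l in Ioi (0:ℝ), -(l ^ 2 * e l * Real.cos (l * x))
      = -∫ l in Ioi (0:ℝ), f1 l := by rw [hf1, integral_neg]
  rw [h3]
  rw [h2] at key
  linarith [key]

lemma intBound (hα : α ∈ Ioo (1:ℝ) 2) :
    ∫ l in Ioi (0:ℝ), (2 + α * (α + 3) * l ^ α + α ^ 2 * (l ^ α * l ^ α)) * Real.exp (-l ^ α)
      ≤ 2 * α + 6 := by
  have hα1 := hα.1
  have hα0 : (0:ℝ) < α := by linarith
  have h0 : IntegrableOn (fun l : ℝ => 2 * Real.exp (-l ^ α)) (Ioi 0) :=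
    (integExp hα1).const_mul 2
  have h1 : IntegrableOn (fun l : ℝ => α * (α + 3) * (l ^ α * Real.exp (-l ^ α))) (Ioi 0) :=
    (integRpow hα1 (q := α) (by linarith)).const_mul _
  have h2i : IntegrableOn (fun l : ℝ => l ^ (α + α) * Real.exp (-l ^ α)) (Ioi 0) :=
    integRpow hα1 (by linarith)
  have h2 : IntegrableOn (fun l : ℝ => α ^ 2 * (l ^ α * l ^ α * Real.exp (-l ^ α))) (Ioi 0) := by
    refine Integrable.const_mul ?_ _
    exact integCongr h2i fun l hl => by rw [Real.rpow_add hl]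
  have hαne : α ≠ 0 := ne_of_gt hα0
  have hadd01 : IntegrableOn (fun l : ℝ =>
      2 * Real.exp (-l ^ α) + α * (α + 3) * (l ^ α * Real.exp (-l ^ α))) (Ioi 0) := h0.add h1
  have heq : ∫ l in Ioi (0:ℝ),
      (2 + α * (α + 3) * l ^ α + α ^ 2 * (l ^ α * l ^ α)) * Real.exp (-l ^ α)
      = (∫ l in Ioi (0:ℝ), 2 * Real.exp (-l ^ α))
        + (∫ l in Ioi (0:ℝ), α * (α + 3) * (l ^ α * Real.exp (-l ^ α)))
        + ∫ l in Ioi (0:ℝ), α ^ 2 * (l ^ α * l ^ α * Real.exp (-l ^ α)) := by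
    rw [← integral_add h0 h1, ← integral_add hadd01 h2]
    exact setIntegral_congr_fun measurableSet_Ioi fun l hl => by ring
  rw [heq, integral_const_mul, integral_const_mul, integral_const_mul]
  have v0 : ∫ l in Ioi (0:ℝ), Real.exp (-l ^ α) = Real.Gamma (1/α + 1) :=
    integral_exp_neg_rpow hα0
  have v1 : ∫ l in Ioi (0:ℝ), l ^ α * Real.exp (-l ^ α)
      = (1/α) * Real.Gamma (1/α + 1) := by
    rw [integral_rpow_mul_exp_neg_rpow hα0 (by linarith),
      show (α + 1)/α = 1/α + 1 by field_simp; ring]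
  have v2 : ∫ l in Ioi (0:ℝ), l ^ α * l ^ α * Real.exp (-l ^ α)
      = (1/α) * Real.Gamma (1/α + 1 + 1) := by
    rw [setIntegral_congr_fun measurableSet_Ioi
      (fun l (hl : l ∈ Ioi (0:ℝ)) => by simp only; rw [← Real.rpow_add hl] :
        EqOn (fun l : ℝ => l ^ α * l ^ α * Real.exp (-l ^ α))
          (fun l : ℝ => l ^ (α + α) * Real.exp (-l ^ α)) (Ioi 0)),
      integral_rpow_mul_exp_neg_rpow hα0 (by linarith),
      show (α + α + 1)/α = 1/α + 1 + 1 by field_simp; ring]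
  rw [v0, v1, v2]
  have hne1 : (1/α + 1 : ℝ) ≠ 0 := ne_of_gt (by positivity)
  rw [Real.Gamma_add_one hne1]
  have hg : Real.Gamma (1/α + 1) ≤ 1 := by
    refine gamma_le_one (le_add_of_nonneg_left (by positivity)) ?_
    have : 1/α ≤ 1 := by rw [div_le_one hα0]; linarith
    linarith
  have hgpos : 0 < Real.Gamma (1/α + 1) := Real.Gamma_pos_of_pos (by positivity)
  have hcollapse : 2 * Real.Gamma (1/α + 1)
      + α * (α + 3) * (1/α * Real.Gamma (1/α + 1))
      + α ^ 2 * (1/α * ((1/α + 1) * Real.Gamma (1/α + 1)))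
      = (2 * α + 6) * Real.Gamma (1/α + 1) := by
    field_simp
    ring
  rw [hcollapse]
  nlinarith

lemma deriv2_eq (hα : α ∈ Ioo (1:ℝ) 2) :
    deriv (deriv (stablePdf α)) = fun x =>
      (1 / π) * ∫ l in Ioi (0:ℝ), -(l ^ 2 * Real.exp (-l ^ α) * Real.cos (l * x)) := by
  have h1 : deriv (stablePdf α) = fun x =>
      (1 / π) * ∫ l in Ioi (0:ℝ), -(l * Real.exp (-l ^ α) * Real.sin (l * x)) := by
    funext x
    have : HasDerivAt (stablePdf α)
        ((1 / π) * ∫ l in Ioi (0:ℝ), -(l * Real.exp (-l ^ α) * Real.sin (l * x))) x := by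
      unfold stablePdf
      exact (hasDeriv1 hα x).const_mul (1 / π)
    exact this.deriv
  rw [h1]
  funext x
  exact ((hasDeriv2 hα x).const_mul (1 / π)).deriv

lemma part1 (hα : α ∈ Ioo (1:ℝ) 2) (x : ℝ) :
    |deriv (deriv (stablePdf α)) x| ≤ 2 / (α * π) := by
  have hα0 : (0:ℝ) < α := by linarith [hα.1]
  rw [deriv2_eq hα]
  have hbd : |∫ l in Ioi (0:ℝ), -(l ^ 2 * Real.exp (-l ^ α) * Real.cos (l * x))|
      ≤ ∫ l in Ioi (0:ℝ), l ^ (2:ℝ) * Real.exp (-l ^ α) := by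
    rw [← Real.norm_eq_abs]
    refine norm_integral_le_of_norm_le (integRpow hα.1 (by norm_num)) ?_
    filter_upwards [ae_restrict_mem measurableSet_Ioi] with l hl
    rw [norm_neg, norm_mul, norm_mul, Real.norm_eq_abs, Real.norm_eq_abs, Real.norm_eq_abs,
      Real.abs_exp, abs_pow, sq_abs,
      show l ^ (2:ℝ) = l ^ (2:ℕ) by rw [← Real.rpow_natCast]; norm_num]
    exact mul_le_of_le_one_right (by positivity) (abs_cos_le_one _)
  have hval : ∫ l in Ioi (0:ℝ), l ^ (2:ℝ) * Real.exp (-l ^ α) = (1/α) * Real.Gamma (3/α) := by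
    rw [integral_rpow_mul_exp_neg_rpow hα0 (by norm_num)]
    norm_num
  have hg : Real.Gamma (3/α) ≤ 2 := by
    refine gamma_le_two ?_ ?_
    · rw [le_div_iff₀ hα0]; linarith [hα.2]
    · rw [div_le_iff₀ hα0]; linarith [hα.1]
  rw [abs_mul]
  have hπ : (0:ℝ) < π := Real.pi_pos
  calc |1/π| * |∫ l in Ioi (0:ℝ), -(l ^ 2 * Real.exp (-l ^ α) * Real.cos (l * x))|
      ≤ (1/π) * ((1/α) * 2) := by
        rw [abs_of_pos (by positivity : (0:ℝ) < 1/π)]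
        refine mul_le_mul_of_nonneg_left ?_ (by positivity)
        refine hbd.trans ?_
        rw [hval]
        have := Real.Gamma_pos_of_pos (by positivity : (0:ℝ) < 3/α)
        gcongr
    _ = 2 / (α * π) := by field_simp

lemma habs2 (hα : α ∈ Ioo (1:ℝ) 2) (x : ℝ) : ∀ l : ℝ, 0 < l →
    |(2 - α * (α + 3) * l ^ α + α ^ 2 * (l ^ α * l ^ α)) * Real.exp (-l ^ α) * Real.cos (l * x)|
      ≤ (2 + α * (α + 3) * l ^ α + α ^ 2 * (l ^ α * l ^ α)) * Real.exp (-l ^ α) := by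
  intro l hl
  have hα1 := hα.1
  have hr : (0:ℝ) ≤ l ^ α := Real.rpow_nonneg hl.le α
  rw [abs_mul, abs_mul, Real.abs_exp]
  have h1 : |2 - α * (α + 3) * l ^ α + α ^ 2 * (l ^ α * l ^ α)|
      ≤ 2 + α * (α + 3) * l ^ α + α ^ 2 * (l ^ α * l ^ α) := by
    rw [abs_le]
    constructor <;> nlinarith
  calc |2 - α * (α + 3) * l ^ α + α ^ 2 * (l ^ α * l ^ α)| * Real.exp (-l ^ α)
        * |Real.cos (l * x)|
      ≤ |2 - α * (α + 3) * l ^ α + α ^ 2 * (l ^ α * l ^ α)| * Real.exp (-l ^ α) * 1 :=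
        mul_le_mul_of_nonneg_left (abs_cos_le_one _) (by positivity)
    _ ≤ (2 + α * (α + 3) * l ^ α + α ^ 2 * (l ^ α * l ^ α)) * Real.exp (-l ^ α) := by
        rw [mul_one]
        exact mul_le_mul_of_nonneg_right h1 (Real.exp_pos _).le

lemma integM (hα : α ∈ Ioo (1:ℝ) 2) : IntegrableOn
    (fun l : ℝ => (2 + α * (α + 3) * l ^ α + α ^ 2 * (l ^ α * l ^ α)) * Real.exp (-l ^ α))
    (Ioi 0) := by
  have hα1 := hα.1
  have h0 : IntegrableOn (fun l : ℝ => 2 * Real.exp (-l ^ α)) (Ioi 0) :=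
    (integExp hα1).const_mul 2
  have h1 : IntegrableOn (fun l : ℝ => α * (α + 3) * (l ^ α * Real.exp (-l ^ α))) (Ioi 0) :=
    (integRpow hα1 (q := α) (by linarith)).const_mul _
  have h2 : IntegrableOn (fun l : ℝ => α ^ 2 * (l ^ α * l ^ α * Real.exp (-l ^ α))) (Ioi 0) := by
    refine Integrable.const_mul ?_ _
    refine integCongr (integRpow hα1 (q := α + α) (by linarith)) fun l hl => ?_
    rw [Real.rpow_add hl]
  have hsum : IntegrableOn (fun l : ℝ =>
      2 * Real.exp (-l ^ α) + α * (α + 3) * (l ^ α * Real.exp (-l ^ α))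
        + α ^ 2 * (l ^ α * l ^ α * Real.exp (-l ^ α))) (Ioi 0) := (h0.add h1).add h2
  exact integCongr hsum fun l hl => by ring

lemma part2 (hα : α ∈ Ioo (1:ℝ) 2) {x : ℝ} (hx : x ≠ 0) :
    |deriv (deriv (stablePdf α)) x| ≤ (2 * α + 6) / (π * x ^ 2) := by
  have hα1 := hα.1
  have hα0 : (0:ℝ) < α := by linarith
  have hπ : (0:ℝ) < π := Real.pi_pos
  have hx2 : (0:ℝ) < x ^ 2 := by positivity
  rw [deriv2_eq hα]
  simp only
  rw [show (∫ l in Ioi (0:ℝ), -(l ^ 2 * Real.exp (-l ^ α) * Real.cos (l * x)))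
      = (x ^ 2)⁻¹ * ∫ l in Ioi (0:ℝ),
        (2 - α * (α + 3) * l ^ α + α ^ 2 * (l ^ α * l ^ α)) * Real.exp (-l ^ α)
          * Real.cos (l * x) from ibp hα hx]
  have hS : |∫ l in Ioi (0:ℝ),
      (2 - α * (α + 3) * l ^ α + α ^ 2 * (l ^ α * l ^ α)) * Real.exp (-l ^ α)
        * Real.cos (l * x)| ≤ 2 * α + 6 := by
    refine le_trans ?_ (intBound hα)
    rw [← Real.norm_eq_abs]
    refine norm_integral_le_of_norm_le (integM hα) ?_
    filter_upwards [ae_restrict_mem measurableSet_Ioi] with l hl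
    rw [Real.norm_eq_abs]
    exact habs2 hα x l hl
  rw [abs_mul, abs_mul, abs_of_pos (by positivity : (0:ℝ) < 1/π),
    abs_of_pos (by positivity : (0:ℝ) < (x ^ 2)⁻¹)]
  calc 1/π * ((x ^ 2)⁻¹ * |∫ l in Ioi (0:ℝ),
        (2 - α * (α + 3) * l ^ α + α ^ 2 * (l ^ α * l ^ α)) * Real.exp (-l ^ α)
          * Real.cos (l * x)|)
      ≤ 1/π * ((x ^ 2)⁻¹ * (2 * α + 6)) := by gcongr
    _ = (2 * α + 6) / (π * x ^ 2) := by field_simp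

end StableAux

theorem stmt_9 (α : ℝ) (hα : α ∈ Set.Ioo (1:ℝ) 2) :
    (∀ x : ℝ, |deriv (deriv (stablePdf α)) x| ≤ 2 / (α * π)) ∧
      (∀ x : ℝ, x ≠ 0 → |deriv (deriv (stablePdf α)) x| ≤ (2 * α + 6) / (π * x ^ 2)) := by
  exact ⟨fun x => StableAux.part1 hα x, fun x hx => StableAux.part2 hα hx⟩
end

section
/- Let α ∈ (1,2) and p(x) = (1/π) ∫_0^∞ e^{−λ^α} cos(λx) dλ. Then ∫_ℝ |p'(u)| du ≤ (4/π)·√((2α+1)/α). -/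
open MeasureTheory Real

open Set Filter Topology

namespace StableAux

variable {α : ℝ}

lemma int_rpow (hα : 1 < α) {s : ℝ} (hs : -1 < s) :
    IntegrableOn (fun l : ℝ => l ^ s * Real.exp (-l ^ α)) (Set.Ioi 0) :=
  integrableOn_rpow_mul_exp_neg_rpow hs (by linarith)

lemma eval_rpow (hα : 1 < α) {s : ℝ} (hs : -1 < s) :
    ∫ l in Set.Ioi (0:ℝ), l ^ s * Real.exp (-l ^ α) = (1/α) * Real.Gamma ((s+1)/α) :=
  integral_rpow_mul_exp_neg_rpow (by linarith) hs

lemma int_g (hα : 1 < α) : IntegrableOn (fun l : ℝ => l * Real.exp (-l ^ α)) (Set.Ioi 0) :=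
  (int_rpow hα (by norm_num : (-1:ℝ) < 1)).congr_fun
    (fun l _ => by simp only [Real.rpow_one]) measurableSet_Ioi

lemma cont_exp (hα : 1 < α) : Continuous (fun l : ℝ => Real.exp (-l ^ α)) :=
  Real.continuous_exp.comp (Real.continuous_rpow_const (by linarith)).neg

lemma int_exp (hα : 1 < α) : IntegrableOn (fun l : ℝ => Real.exp (-l ^ α)) (Set.Ioi 0) :=
  (int_rpow hα (by norm_num : (-1:ℝ) < 0)).congr_fun
    (fun l hl => by simp only [Real.rpow_zero, one_mul]) measurableSet_Ioi

lemma Gamma_le_one {s : ℝ} (h1 : 1 ≤ s) (h2 : s ≤ 2) : Real.Gamma s ≤ 1 := by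
  have := Real.convexOn_Gamma.2 (mem_Ioi.mpr one_pos) (mem_Ioi.mpr two_pos)
    (by linarith : (0:ℝ) ≤ 2 - s) (by linarith : (0:ℝ) ≤ s - 1) (by ring)
  simp only [smul_eq_mul, Real.Gamma_one] at this
  have h2' : Real.Gamma 2 = 1 := by
    rw [(by norm_num : (2:ℝ) = 1 + 1), Real.Gamma_add_one one_ne_zero, Real.Gamma_one, mul_one]
  rw [h2'] at this
  calc Real.Gamma s = Real.Gamma ((2 - s) * 1 + (s - 1) * 2) := by ring_nf
    _ ≤ (2 - s) * 1 + (s - 1) * 1 := this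
    _ = 1 := by ring

lemma hasDeriv_pdf (hα : 1 < α) (x : ℝ) :
    HasDerivAt (stablePdf α)
      ((1 / π) * ∫ l in Set.Ioi (0:ℝ), Real.exp (-l ^ α) * (-Real.sin (l * x) * l)) x := by
  have key := hasDerivAt_integral_of_dominated_loc_of_deriv_le
      (μ := volume.restrict (Set.Ioi 0)) (x₀ := x)
      (F := fun x l => Real.exp (-l ^ α) * Real.cos (l * x))
      (F' := fun x l => Real.exp (-l ^ α) * (-Real.sin (l * x) * l))
      (bound := fun l => l * Real.exp (-l ^ α)) (Metric.ball_mem_nhds x one_pos)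
      (Eventually.of_forall fun y =>
        (((cont_exp hα).mul (Real.continuous_cos.comp (continuous_id.mul continuous_const)))).aestronglyMeasurable)
      ?_ ?_ ?_ ?_ ?_
  · exact key.2.const_mul (1 / π)
  · -- Integrable (F x)
    refine Integrable.mono' (int_exp hα) ?_ ?_
    · exact (((cont_exp hα).mul (Real.continuous_cos.comp (continuous_id.mul continuous_const)))).aestronglyMeasurable
    · refine Eventually.of_forall fun l => ?_
      rw [norm_mul, Real.norm_eq_abs, Real.norm_eq_abs, abs_of_pos (Real.exp_pos _)]
      calc Real.exp (-l ^ α) * |Real.cos (l * x)| ≤ Real.exp (-l ^ α) * 1 :=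
            mul_le_mul_of_nonneg_left (Real.abs_cos_le_one _) (Real.exp_pos _).le
        _ = Real.exp (-l ^ α) := mul_one _
  · exact (((cont_exp hα).mul
      ((Real.continuous_sin.comp (continuous_id.mul continuous_const)).neg.mul continuous_id))).aestronglyMeasurable
  · -- bound
    rw [ae_restrict_iff' measurableSet_Ioi]
    refine Eventually.of_forall fun l hl => fun y _ => ?_
    rw [norm_mul, norm_mul, Real.norm_eq_abs, Real.norm_eq_abs, Real.norm_eq_abs,
      abs_of_pos (Real.exp_pos _), abs_neg, abs_of_pos (mem_Ioi.mp hl)]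
    calc Real.exp (-l ^ α) * (|Real.sin (l * y)| * l) ≤ Real.exp (-l ^ α) * (1 * l) :=
          mul_le_mul_of_nonneg_left
            (mul_le_mul_of_nonneg_right (Real.abs_sin_le_one _) (mem_Ioi.mp hl).le)
            (Real.exp_pos _).le
      _ = l * Real.exp (-l ^ α) := by ring
  · exact int_g hα
  · -- h_diff
    refine Eventually.of_forall fun l => fun y _ => ?_
    have h1 : HasDerivAt (fun y : ℝ => l * y) l y := by
      simpa using (hasDerivAt_id y).const_mul l
    have h2 : HasDerivAt (fun y : ℝ => Real.cos (l * y)) (-Real.sin (l * y) * l) y :=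
      (Real.hasDerivAt_cos (l * y)).comp y h1
    simpa [mul_comm, mul_left_comm, mul_assoc] using h2.const_mul (Real.exp (-l ^ α))

lemma deriv_pdf (hα : 1 < α) (x : ℝ) :
    deriv (stablePdf α) x
      = (1 / π) * ∫ l in Set.Ioi (0:ℝ), Real.exp (-l ^ α) * (-Real.sin (l * x) * l) :=
  (hasDeriv_pdf hα x).deriv

lemma D_glob (hα : 1 < α) (hα2 : α < 2) (x : ℝ) :
    |∫ l in Set.Ioi (0:ℝ), Real.exp (-l ^ α) * (-Real.sin (l * x) * l)| ≤ 1 / α := by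
  have h1 : |∫ l in Set.Ioi (0:ℝ), Real.exp (-l ^ α) * (-Real.sin (l * x) * l)|
      ≤ ∫ l in Set.Ioi (0:ℝ), l * Real.exp (-l ^ α) := by
    rw [← Real.norm_eq_abs]
    refine norm_integral_le_of_norm_le (int_g hα) ?_
    rw [ae_restrict_iff' measurableSet_Ioi]
    refine Eventually.of_forall fun l hl => ?_
    rw [norm_mul, norm_mul, Real.norm_eq_abs, Real.norm_eq_abs, Real.norm_eq_abs,
      abs_of_pos (Real.exp_pos _), abs_neg, abs_of_pos (mem_Ioi.mp hl)]
    calc Real.exp (-l ^ α) * (|Real.sin (l * x)| * l) ≤ Real.exp (-l ^ α) * (1 * l) :=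
          mul_le_mul_of_nonneg_left
            (mul_le_mul_of_nonneg_right (Real.abs_sin_le_one _) (mem_Ioi.mp hl).le)
            (Real.exp_pos _).le
      _ = l * Real.exp (-l ^ α) := by ring
  have h2 : ∫ l in Set.Ioi (0:ℝ), l * Real.exp (-l ^ α) = (1/α) * Real.Gamma (2/α) := by
    have := eval_rpow hα (by norm_num : (-1:ℝ) < 1)
    norm_num at this
    rw [this, one_div]
  have h3 : Real.Gamma (2/α) ≤ 1 :=
    Gamma_le_one (by rw [le_div_iff₀ (by linarith)]; linarith)
      (by rw [div_le_iff₀ (by linarith)]; linarith)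
  calc |∫ l in Set.Ioi (0:ℝ), Real.exp (-l ^ α) * (-Real.sin (l * x) * l)|
      ≤ (1/α) * Real.Gamma (2/α) := h2 ▸ h1
    _ ≤ (1/α) * 1 := by
        apply mul_le_mul_of_nonneg_left h3
        positivity
    _ = 1/α := mul_one _

lemma D_tail (hα : 1 < α) (hα2 : α < 2) {x : ℝ} (hx : x ≠ 0) :
    |∫ l in Set.Ioi (0:ℝ), Real.exp (-l ^ α) * (-Real.sin (l * x) * l)| ≤ (2*α+1) / x^2 := by
  have hα0 : (0:ℝ) < α := by linarith
  have hx2 : (0:ℝ) < x^2 := by positivity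
  set g : ℝ → ℝ := fun l => l * Real.exp (-l ^ α) with hg_def
  set g1 : ℝ → ℝ := fun l => (1 - α * l ^ α) * Real.exp (-l ^ α) with hg1_def
  set g2 : ℝ → ℝ := fun l => -(α * l ^ (α-1) * ((α+1) - α * l ^ α) * Real.exp (-l ^ α))
    with hg2_def
  set H : ℝ → ℝ := fun l => (-(g l * Real.cos (l*x))) / x + (g1 l * Real.sin (l*x)) / x^2
    with hH_def
  have hrpow : ∀ l : ℝ, HasDerivAt (fun l : ℝ => l ^ α) (α * l ^ (α-1)) l := fun l =>
    Real.hasDerivAt_rpow_const (Or.inr hα.le)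
  have hexp : ∀ l : ℝ, HasDerivAt (fun l : ℝ => Real.exp (-l ^ α))
      (Real.exp (-l ^ α) * (-(α * l ^ (α-1)))) l := fun l => by
    have := (Real.hasDerivAt_exp (-l ^ α)).comp l (hrpow l).neg
    simpa [Function.comp_def] using this
  have hg : ∀ l ∈ Set.Ioi (0:ℝ), HasDerivAt g (g1 l) l := by
    intro l hl
    have hl0 : (0:ℝ) < l := hl
    have h := (hasDerivAt_id l).mul (hexp l)
    have hla : l ^ α = l ^ (α - 1) * l := by
      rw [← Real.rpow_add_one (ne_of_gt hl0), sub_add_cancel]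
    refine h.congr_deriv ?_
    simp only [hg1_def, id_eq, one_mul]
    set e := Real.exp (-l ^ α)
    rw [hla]; ring
  have hg1 : ∀ l ∈ Set.Ioi (0:ℝ), HasDerivAt g1 (g2 l) l := by
    intro l hl
    have h := (((hrpow l).const_mul α).const_sub 1).mul (hexp l)
    refine h.congr_deriv ?_
    simp only [hg2_def]
    ring
  have hH : ∀ l ∈ Set.Ioi (0:ℝ),
      HasDerivAt H (g l * Real.sin (l*x) + g2 l * Real.sin (l*x) / x^2) l := by
    intro l hl
    have hlx : HasDerivAt (fun l : ℝ => l * x) x l := by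
      simpa using (hasDerivAt_id l).mul_const x
    have hcos : HasDerivAt (fun l : ℝ => Real.cos (l*x)) (-Real.sin (l*x) * x) l :=
      hlx.cos
    have hsin : HasDerivAt (fun l : ℝ => Real.sin (l*x)) (Real.cos (l*x) * x) l :=
      hlx.sin
    have T1 := (((hg l hl).mul hcos).neg).div_const x
    have T2 := ((hg1 l hl).mul hsin).div_const (x^2)
    have := T1.add T2
    refine this.congr_deriv ?_
    field_simp
    ring
  -- continuity
  have cg : Continuous g := continuous_id.mul (cont_exp hα)
  have cg1 : Continuous g1 :=
    (continuous_const.sub (continuous_const.mul (Real.continuous_rpow_const hα0.le))).mul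
      (cont_exp hα)
  have ccos : Continuous fun l : ℝ => Real.cos (l*x) :=
    Real.continuous_cos.comp (continuous_id.mul continuous_const)
  have csin : Continuous fun l : ℝ => Real.sin (l*x) :=
    Real.continuous_sin.comp (continuous_id.mul continuous_const)
  have cH : Continuous H := ((cg.mul ccos).neg.div_const x).add ((cg1.mul csin).div_const (x^2))
  -- integrability
  have int_gsin : IntegrableOn (fun l => g l * Real.sin (l*x)) (Set.Ioi 0) := by
    refine Integrable.mono' (int_g hα) ((cg.mul csin).aestronglyMeasurable.restrict) ?_
    rw [ae_restrict_iff' measurableSet_Ioi]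
    refine Eventually.of_forall fun l hl => ?_
    have hl0 : (0:ℝ) < l := hl
    rw [norm_mul, Real.norm_eq_abs, Real.norm_eq_abs, hg_def]
    calc |l * Real.exp (-l ^ α)| * |Real.sin (l*x)| ≤ |l * Real.exp (-l ^ α)| * 1 :=
          mul_le_mul_of_nonneg_left (Real.abs_sin_le_one _) (abs_nonneg _)
      _ = l * Real.exp (-l ^ α) := by
          rw [mul_one, abs_of_pos (by positivity)]
  set bound2 : ℝ → ℝ := fun l =>
    α*(α+1) * (l^(α-1) * Real.exp (-l^α)) + α^2 * (l^(2*α-1) * Real.exp (-l^α)) with hb2_def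
  have int_bound2 : IntegrableOn bound2 (Set.Ioi 0) :=
    ((int_rpow hα (by linarith : (-1:ℝ) < α - 1)).const_mul _).add
      ((int_rpow hα (by linarith : (-1:ℝ) < 2*α - 1)).const_mul _)
  have g2_bound : ∀ l ∈ Set.Ioi (0:ℝ), |g2 l| ≤ bound2 l := by
    intro l hl
    have hl0 : (0:ℝ) < l := hl
    have hA : (0:ℝ) ≤ l ^ (α-1) := Real.rpow_nonneg hl0.le _
    have hB : (0:ℝ) ≤ l ^ α := Real.rpow_nonneg hl0.le _
    have h2a : l ^ (2*α-1) = l ^ (α-1) * l ^ α := by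
      rw [← Real.rpow_add hl0]; ring_nf
    rw [hg2_def]
    simp only [abs_neg]
    rw [abs_mul, abs_mul, abs_of_pos (Real.exp_pos _),
      abs_of_nonneg (by positivity : (0:ℝ) ≤ α * l ^ (α-1))]
    calc α * l ^ (α-1) * |α + 1 - α * l ^ α| * Real.exp (-l^α)
        ≤ α * l ^ (α-1) * ((α+1) + α * l ^ α) * Real.exp (-l^α) := by
          have : |α + 1 - α * l ^ α| ≤ (α+1) + α * l ^ α := by
            refine (abs_sub _ _).trans ?_
            rw [abs_of_pos (by linarith), abs_of_nonneg (by positivity)]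
          have h1 : (0:ℝ) ≤ α * l ^ (α-1) := by positivity
          have h2 := Real.exp_pos (-l^α)
          nlinarith [mul_le_mul_of_nonneg_left this h1]
      _ = bound2 l := by rw [hb2_def]; simp only; rw [h2a]; ring
  have int_g2 : IntegrableOn g2 (Set.Ioi 0) := by
    refine Integrable.mono' int_bound2 ?_ ?_
    · refine Continuous.aestronglyMeasurable ?_ |>.restrict
      exact ((continuous_const.mul (Real.continuous_rpow_const (by linarith))).mul
        (continuous_const.sub (continuous_const.mul
          (Real.continuous_rpow_const hα0.le)))).mul (cont_exp hα) |>.neg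
    · rw [ae_restrict_iff' measurableSet_Ioi]
      exact Eventually.of_forall fun l hl => by
        rw [Real.norm_eq_abs]; exact g2_bound l hl
  have int_g2sin : IntegrableOn (fun l => g2 l * Real.sin (l*x) / x^2) (Set.Ioi 0) := by
    refine Integrable.mono' (int_g2.abs.div_const (x^2))
      (((((continuous_const.mul (Real.continuous_rpow_const (by linarith))).mul
        (continuous_const.sub (continuous_const.mul
          (Real.continuous_rpow_const hα0.le)))).mul (cont_exp hα)).neg.mul csin |>.div_const
            (x^2)).aestronglyMeasurable.restrict) ?_
    refine Eventually.of_forall fun l => ?_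
    rw [Real.norm_eq_abs, abs_div, abs_of_pos hx2, abs_mul]
    gcongr
    calc |g2 l| * |Real.sin (l*x)| ≤ |g2 l| * 1 :=
          mul_le_mul_of_nonneg_left (Real.abs_sin_le_one _) (abs_nonneg _)
      _ = |g2 l| := mul_one _
  -- limits
  have htop : Tendsto (fun l : ℝ => l ^ α) atTop atTop := tendsto_rpow_atTop hα0
  have tg : Tendsto g atTop (𝓝 0) := by
    have base := tendsto_rpow_mul_exp_neg_mul_atTop_nhds_zero (1/α) 1 one_pos
    have comp := base.comp htop
    refine comp.congr' ?_
    filter_upwards [eventually_gt_atTop (0:ℝ)] with l hl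
    simp only [Function.comp_apply, hg_def]
    rw [← Real.rpow_mul hl.le, mul_one_div_cancel hα0.ne', Real.rpow_one, neg_one_mul]
  have tg1 : Tendsto g1 atTop (𝓝 0) := by
    have e1 : Tendsto (fun l : ℝ => Real.exp (-l ^ α)) atTop (𝓝 0) :=
      Real.tendsto_exp_neg_atTop_nhds_zero.comp htop
    have e2 : Tendsto (fun l : ℝ => l ^ α * Real.exp (-l ^ α)) atTop (𝓝 0) := by
      have := (tendsto_pow_mul_exp_neg_atTop_nhds_zero 1).comp htop
      simpa [Function.comp_def] using this
    have h := e1.sub (e2.const_mul α)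
    norm_num at h
    refine h.congr fun l => ?_
    simp only [hg1_def]; ring
  have key_bd : ∀ a b c s : ℝ, |c| ≤ 1 → |s| ≤ 1 →
      |(-(a*c))/x + (b*s)/x^2| ≤ |a| * |x|⁻¹ + |b| * (x^2)⁻¹ := by
    intro a b c s hc hs
    refine (abs_add_le _ _).trans (add_le_add ?_ ?_)
    · rw [abs_div, abs_neg, abs_mul, div_eq_mul_inv]
      refine mul_le_mul_of_nonneg_right ?_ (inv_nonneg.mpr (abs_nonneg _))
      calc |a| * |c| ≤ |a| * 1 := mul_le_mul_of_nonneg_left hc (abs_nonneg _)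
        _ = |a| := mul_one _
    · rw [abs_div, abs_mul, abs_of_pos hx2, div_eq_mul_inv]
      refine mul_le_mul_of_nonneg_right ?_ (inv_nonneg.mpr hx2.le)
      calc |b| * |s| ≤ |b| * 1 := mul_le_mul_of_nonneg_left hs (abs_nonneg _)
        _ = |b| := mul_one _
  have htend : Tendsto H atTop (𝓝 0) := by
    have hb : Tendsto (fun l => |g l| * |x|⁻¹ + |g1 l| * (x^2)⁻¹) atTop (𝓝 0) := by
      have h1 : Tendsto (fun l => |g l| * |x|⁻¹) atTop (𝓝 0) := by
        simpa using (tg.abs.mul_const |x|⁻¹)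
      have h2 : Tendsto (fun l => |g1 l| * (x^2)⁻¹) atTop (𝓝 0) := by
        simpa using (tg1.abs.mul_const (x^2)⁻¹)
      simpa using h1.add h2
    refine squeeze_zero_norm (fun l => ?_) hb
    rw [Real.norm_eq_abs]
    exact key_bd (g l) (g1 l) _ _ (Real.abs_cos_le_one _) (Real.abs_sin_le_one _)
  -- FTC
  have hH0 : H 0 = 0 := by
    simp [hH_def, hg_def, hg1_def, Real.zero_rpow hα0.ne']
  have key := integral_Ioi_of_hasDerivAt_of_tendsto (f := H)
      (f' := fun l => g l * Real.sin (l*x) + g2 l * Real.sin (l*x) / x^2)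
      cH.continuousWithinAt hH (int_gsin.add int_g2sin) htend
  rw [integral_add int_gsin int_g2sin, hH0, sub_zero] at key
  have hsplit : (∫ l in Set.Ioi (0:ℝ), g l * Real.sin (l*x))
      = - ∫ l in Set.Ioi (0:ℝ), g2 l * Real.sin (l*x) / x^2 := by linarith
  have hGamma2 : Real.Gamma 2 = 1 := by
    rw [(by norm_num : (2:ℝ) = 1 + 1), Real.Gamma_add_one one_ne_zero, Real.Gamma_one, mul_one]
  have h3 : ∫ l in Set.Ioi (0:ℝ), |g2 l| ≤ 2*α+1 := by
    have hmono := setIntegral_mono_on int_g2.abs int_bound2 measurableSet_Ioi g2_bound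
    have e1 := eval_rpow hα (show (-1:ℝ) < α-1 by linarith)
    have e2 := eval_rpow hα (show (-1:ℝ) < 2*α-1 by linarith)
    have hb : ∫ l in Set.Ioi (0:ℝ), bound2 l
        = α*(α+1) * ((1/α) * Real.Gamma ((α-1+1)/α))
          + α^2 * ((1/α) * Real.Gamma ((2*α-1+1)/α)) := by
      rw [hb2_def]
      rw [integral_add ((int_rpow hα (by linarith : (-1:ℝ) < α - 1)).const_mul _)
        ((int_rpow hα (by linarith : (-1:ℝ) < 2*α - 1)).const_mul _)]
      simp only [MeasureTheory.integral_const_mul]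
      rw [e1, e2]
    have gv1 : (α-1+1)/α = 1 := by field_simp; ring
    have gv2 : (2*α-1+1)/α = 2 := by field_simp; ring
    rw [gv1, gv2, Real.Gamma_one, hGamma2] at hb
    refine hmono.trans (le_of_eq ?_)
    rw [hb]; field_simp; ring
  have habs2 : |∫ l in Set.Ioi (0:ℝ), g2 l * Real.sin (l*x) / x^2| ≤ (2*α+1)/x^2 := by
    have h1 : |∫ l in Set.Ioi (0:ℝ), g2 l * Real.sin (l*x) / x^2|
        ≤ ∫ l in Set.Ioi (0:ℝ), |g2 l| / x^2 := by
      rw [← Real.norm_eq_abs]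
      refine norm_integral_le_of_norm_le (int_g2.abs.div_const (x^2)) ?_
      refine Eventually.of_forall fun l => ?_
      rw [Real.norm_eq_abs, abs_div, abs_of_pos hx2, abs_mul]
      gcongr
      calc |g2 l| * |Real.sin (l*x)| ≤ |g2 l| * 1 :=
            mul_le_mul_of_nonneg_left (Real.abs_sin_le_one _) (abs_nonneg _)
        _ = |g2 l| := mul_one _
    have h2 : (∫ l in Set.Ioi (0:ℝ), |g2 l| / x^2)
        = (∫ l in Set.Ioi (0:ℝ), |g2 l|) / x^2 := integral_div _ _
    refine h1.trans ?_
    rw [h2]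
    gcongr
  have hDeq : (∫ l in Set.Ioi (0:ℝ), Real.exp (-l^α) * (-Real.sin (l*x) * l))
      = - ∫ l in Set.Ioi (0:ℝ), g l * Real.sin (l*x) := by
    rw [← integral_neg]
    refine setIntegral_congr_fun measurableSet_Ioi fun l _ => ?_
    simp only [hg_def]; ring
  rw [hDeq, abs_neg, hsplit, abs_neg]
  exact habs2

end StableAux

open StableAux in
theorem stmt_10 (α : ℝ) (hα : α ∈ Set.Ioo (1:ℝ) 2) :
    (∫ u : ℝ, |deriv (stablePdf α) u|) ≤ (4 / π) * Real.sqrt ((2 * α + 1) / α) := by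
  obtain ⟨hα1, hα2⟩ := hα
  have hα0 : (0:ℝ) < α := by linarith
  have hπ : (0:ℝ) < π := Real.pi_pos
  set s : ℝ := Real.sqrt ((2 * α + 1) / α) with hs_def
  have hs0 : 0 < s := Real.sqrt_pos.mpr (by positivity)
  have hs2 : s ^ 2 = (2 * α + 1) / α := Real.sq_sqrt (by positivity)
  set R : ℝ := α * s with hR_def
  have hR0 : 0 < R := by positivity
  set φ : ℝ → ℝ := fun u => if u ≤ R then 1/(α*π) else (2*α+1)/(π*u^2) with hφ_def
  -- pointwise bound
  have hptw : ∀ u : ℝ, |deriv (stablePdf α) u| ≤ φ |u| := by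
    intro u
    rw [deriv_pdf hα1 u, abs_mul, abs_of_pos (by positivity : (0:ℝ) < 1/π)]
    by_cases h : |u| ≤ R
    · rw [hφ_def]; simp only [if_pos h]
      calc (1/π) * |∫ l in Set.Ioi (0:ℝ), Real.exp (-l ^ α) * (-Real.sin (l * u) * l)|
          ≤ (1/π) * (1/α) :=
            mul_le_mul_of_nonneg_left (D_glob hα1 hα2 u) (by positivity)
        _ = 1/(α*π) := by field_simp
    · have hu0 : u ≠ 0 := by
        intro h0; rw [h0, abs_zero] at h; exact h hR0.le
      rw [hφ_def]; simp only [if_neg h]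
      calc (1/π) * |∫ l in Set.Ioi (0:ℝ), Real.exp (-l ^ α) * (-Real.sin (l * u) * l)|
          ≤ (1/π) * ((2*α+1) / u^2) :=
            mul_le_mul_of_nonneg_left (D_tail hα1 hα2 hu0) (by positivity)
        _ = (2*α+1)/(π*|u|^2) := by rw [sq_abs]; field_simp
  -- integrability of φ on Ioi 0
  have hioc : IntegrableOn φ (Ioc 0 R) := by
    refine (integrableOn_const (C := 1/(α*π)) measure_Ioc_lt_top.ne).congr_fun
      (fun u hu => ?_) measurableSet_Ioc
    rw [hφ_def]; simp only [if_pos hu.2]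
  have hcg : ∀ u ∈ Ioi R, (2*α+1)/π * u ^ ((-2):ℝ) = φ u := by
    intro u hu
    have hu0 : (0:ℝ) < u := hR0.trans hu
    have hrp : u ^ ((-2):ℝ) = (u^2)⁻¹ := by
      rw [show ((-2):ℝ) = -((2:ℕ):ℝ) by norm_num, Real.rpow_neg hu0.le, Real.rpow_natCast]
    have hu' : u ≠ 0 := hu0.ne'
    rw [hφ_def]; simp only [if_neg (not_le.mpr (mem_Ioi.mp hu))]
    rw [hrp]
    field_simp
  have hioi : IntegrableOn φ (Ioi R) := by
    have base : IntegrableOn (fun u : ℝ => (2*α+1)/π * u ^ ((-2):ℝ)) (Ioi R) :=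
      (integrableOn_Ioi_rpow_of_lt (by norm_num : (-2:ℝ) < -1) hR0).const_mul ((2*α+1)/π)
    exact base.congr_fun hcg measurableSet_Ioi
  have hφint_Ioi : IntegrableOn φ (Ioi 0) := by
    rw [← Ioc_union_Ioi_eq_Ioi hR0.le, integrableOn_union]
    exact ⟨hioc, hioi⟩
  -- integrability of φ ∘ abs on ℝ
  have int_Ioi' : IntegrableOn (fun u => φ |u|) (Ioi 0) :=
    hφint_Ioi.congr_fun (fun u hu => by rw [abs_of_pos hu]) measurableSet_Ioi
  have int_Iic : IntegrableOn (fun u => φ |u|) (Iic 0) := by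
    rw [← Measure.map_neg_eq_self (volume : Measure ℝ)]
    have m : MeasurableEmbedding fun x : ℝ => -x := (Homeomorph.neg ℝ).measurableEmbedding
    rw [m.integrableOn_map_iff]
    simp_rw [Function.comp_def, abs_neg, neg_preimage, neg_Iic, neg_zero]
    exact (integrableOn_Ici_iff_integrableOn_Ioi).mpr int_Ioi'
  have hφabs_int : Integrable (fun u => φ |u|) := by
    rw [← integrableOn_univ, ← Iic_union_Ioi (a := (0:ℝ)), integrableOn_union]
    exact ⟨int_Iic, int_Ioi'⟩
  -- integral of φ ∘ abs
  have hval : ∫ u : ℝ, φ |u| = 2 * ((R * (1/(α*π))) + (2*α+1)/π * R⁻¹) := by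
    rw [integral_comp_abs (f := φ)]
    have hsplit : ∫ u in Ioi (0:ℝ), φ u = (∫ u in Ioc (0:ℝ) R, φ u) + ∫ u in Ioi R, φ u := by
      rw [← Ioc_union_Ioi_eq_Ioi hR0.le,
        setIntegral_union (Ioc_disjoint_Ioi le_rfl) measurableSet_Ioi hioc hioi]
    have h1 : ∫ u in Ioc (0:ℝ) R, φ u = R * (1/(α*π)) := by
      have hc : ∀ u ∈ Ioc (0:ℝ) R, φ u = 1/(α*π) := fun u hu => by
        rw [hφ_def]; simp only [if_pos hu.2]
      rw [setIntegral_congr_fun measurableSet_Ioc hc, setIntegral_const, measureReal_def, Real.volume_Ioc,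
        smul_eq_mul, ENNReal.toReal_ofReal (by linarith), sub_zero]
    have h2 : ∫ u in Ioi R, φ u = (2*α+1)/π * R⁻¹ := by
      have hcg' : ∀ u ∈ Ioi R, φ u = (2*α+1)/π * u ^ ((-2):ℝ) := fun u hu => (hcg u hu).symm
      rw [setIntegral_congr_fun measurableSet_Ioi hcg', MeasureTheory.integral_const_mul,
        integral_Ioi_rpow_of_lt (by norm_num) hR0,
        show ((-2):ℝ) + 1 = -1 by norm_num, Real.rpow_neg_one]
      norm_num
    rw [hsplit, h1, h2]
  -- bound
  have hmeas : AEStronglyMeasurable (deriv (stablePdf α)) volume :=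
    (measurable_deriv _).aestronglyMeasurable
  have hint : Integrable (deriv (stablePdf α)) :=
    hφabs_int.mono' hmeas (Eventually.of_forall fun u => by
      rw [Real.norm_eq_abs]; exact hptw u)
  have hle : (∫ u : ℝ, |deriv (stablePdf α) u|) ≤ ∫ u : ℝ, φ |u| :=
    integral_mono hint.abs hφabs_int hptw
  refine hle.trans ?_
  rw [hval]
  apply le_of_eq
  have hα' : α ≠ 0 := hα0.ne'
  have hπ' : π ≠ 0 := hπ.ne'
  have hs' : s ≠ 0 := hs0.ne'
  have h2a1 : 2*α+1 = α * s^2 := by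
    rw [hs2]; field_simp
  rw [hR_def, h2a1]
  field_simp
  ring
end
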